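/- arXiv:2410.06840 — 11 statements merged into one kernel-verified Lean document; each statement's English description precedes it below -/
import Mathlib

section
/- Let V be a finite set, for each v ∈ V let X_v be a set, and let X ⊆ ∏_{v∈V} X_v. Let A, B, C, D ⊆ V and n, m ∈ ℕ. If x_A n-determines x_B and x_C m-determines x_D, then x_{(C \ B) ∪ A} nm-determines x_D. -/
/-- `x_A` `d`-determines `x_B`: for every choice `c` of values on the coordinates in `A`,
the projection onto `B` of the set of elements of `S` agreeing with `c` on `A`
has at most `d` elements. -/
def Determines {V : Type*} {F : V → Type*} (S : Set (∀ v, F v))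
    (A B : Set V) (d : ℕ) : Prop :=
  ∀ c : ∀ a : A, F a,
    ((fun x : ∀ v, F v => fun b : B => x b) ''
      {x ∈ S | ∀ a : A, x a = c a}).encard ≤ (d : ℕ∞)

/-! The admissible `D`-values of a point are found by first choosing its `B`-values
(at most `n` choices once the values on `A` are fixed) and then, with the values on `C \ B`
also fixed, the `D`-values (at most `m` choices once the values on all of `C` are fixed). -/

namespace Set

theorem Finite.encard_biUnion_le_mul {ι α : Type*} {t : Set ι} (ht : t.Finite)
    {s : ι → Set α} {m : ℕ∞} (hs : ∀ i ∈ t, (s i).encard ≤ m) :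
    (⋃ i ∈ t, s i).encard ≤ t.encard * m := by
  lift t to Finset ι using ht
  calc (⋃ i ∈ (t : Set ι), s i).encard ≤ ∑ i ∈ t, (s i).encard := by
        simpa using t.set_encard_biUnion_le s
    _ ≤ t.card • m := Finset.sum_le_card_nsmul _ _ _ hs
    _ = (t : Set ι).encard * m := by rw [encard_coe_eq_coe_finsetCard, nsmul_eq_mul]

theorem encard_image_le_mul_of_fibers {α β γ : Type*} {f : α → β} {g : α → γ} {T : Set α}
    {m : ℕ∞} (hT : (f '' T).Finite) (hfib : ∀ b ∈ f '' T, (g '' {x ∈ T | f x = b}).encard ≤ m) :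
    (g '' T).encard ≤ (f '' T).encard * m := by
  refine le_trans (encard_le_encard ?_) (hT.encard_biUnion_le_mul hfib)
  rintro _ ⟨x, hx, rfl⟩
  exact mem_biUnion (mem_image_of_mem f hx) (mem_image_of_mem g ⟨hx, rfl⟩)

end Set

open Set

theorem Determines.encard_image_le {V : Type*} {F : V → Type*} {S : Set (∀ v, F v)}
    {A B : Set V} {d : ℕ} (h : Determines S A B d) {T : Set (∀ v, F v)} (hTS : T ⊆ S)
    (hT : ∀ x ∈ T, ∀ y ∈ T, ∀ a ∈ A, x a = y a) : (B.domRestrict '' T).encard ≤ d := by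
  obtain rfl | ⟨x₀, hx₀⟩ := T.eq_empty_or_nonempty
  · simp
  refine le_trans (encard_le_encard (image_mono fun x hx => ?_)) (h (A.domRestrict x₀))
  exact ⟨hTS hx, fun a => hT x hx x₀ hx₀ a a.2⟩

theorem determines_subst_general {V : Type*} {F : V → Type*}
    (S : Set (∀ v, F v)) (A B C D : Set V) (n m : ℕ)
    (hAB : Determines S A B n) (hCD : Determines S C D m) :
    Determines S ((C \ B) ∪ A) D (n * m) := by
  intro c
  set T := {x ∈ S | ∀ a : ↥(C \ B ∪ A), x a = c a}
  have hTS : T ⊆ S := sep_subset _ _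
  have hB : (B.domRestrict '' T).encard ≤ n :=
    hAB.encard_image_le hTS fun x hx y hy a ha =>
      (hx.2 ⟨a, .inr ha⟩).trans (hy.2 ⟨a, .inr ha⟩).symm
  have hD : ∀ b ∈ B.domRestrict '' T, (D.domRestrict '' {x ∈ T | B.domRestrict x = b}).encard ≤ m :=
    fun b _ => hCD.encard_image_le (fun x hx => hTS hx.1) fun x hx y hy a ha => by
      by_cases haB : a ∈ B
      · exact (congrFun hx.2 ⟨a, haB⟩).trans (congrFun hy.2 ⟨a, haB⟩).symm
      · exact (hx.1.2 ⟨a, .inl ⟨ha, haB⟩⟩).trans (hy.1.2 ⟨a, .inl ⟨ha, haB⟩⟩).symm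
  calc (D.domRestrict '' T).encard ≤ (B.domRestrict '' T).encard * m :=
        encard_image_le_mul_of_fibers (finite_of_encard_le_coe hB) hD
    _ ≤ n * m := by gcongr
    _ = (n * m : ℕ) := by push_cast; rfl

/-- Substitution: if `x_A` `n`-determines `x_B` and `x_C` `m`-determines `x_D`,
then `x_{(C \ B) ∪ A}` `nm`-determines `x_D`. -/
theorem determines_subst {V : Type*} [Fintype V] {F : V → Type*}
    (S : Set (∀ v, F v)) (A B C D : Set V) (n m : ℕ)
    (hAB : Determines S A B n) (hCD : Determines S C D m) :
    Determines S ((C \ B) ∪ A) D (n * m) :=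
  determines_subst_general S A B C D n m hAB hCD
end

section
/- Let F be an infinite field, V a finite set, and X ⊆ F^V a linear subspace. Then the dimension of X as an F-vector space equals the combinatorial dimension of X, i.e. dim_F(X) = cdim(X). -/
/-- The combinatorial dimension of `S`: the minimum cardinality of a subset
`A ⊆ V` such that `x_A` finitely determines `x_V`. -/
noncomputable def cdim {V : Type*} {F : V → Type*} (S : Set (∀ v, F v)) : ℕ :=
  sInf {n : ℕ | ∃ A : Set V, A.ncard = n ∧ ∃ d : ℕ, Determines S A Set.univ d}

/-- For a linear subspace `X` of `F^V` over an infinite field `F`, the linear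
dimension of `X` equals its combinatorial dimension. -/
theorem finrank_eq_cdim {F : Type*} [Field F] [Infinite F]
    {V : Type*} [Fintype V] (X : Submodule F (V → F)) :
    Module.finrank F X = cdim (X : Set (V → F)) := by
  classical
  -- the restriction-to-univ map is injective
  have hres : Function.Injective (fun x : V → F => fun b : (Set.univ : Set V) => x b) := by
    intro x y h
    funext v
    exact congrFun h ⟨v, trivial⟩
  -- Step A: there is a good set A of size ≤ finrank
  obtain ⟨A, hAcard, hAdet⟩ :
      ∃ A : Set V, A.ncard ≤ Module.finrank F X ∧
        Determines (X : Set (V → F)) A Set.univ 1 := by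
    set e : V → Module.Dual F X := fun v => (LinearMap.proj v).comp X.subtype with he
    have hspan : Submodule.span F (Set.range e) = ⊤ := by
      apply Submodule.span_eq_top_of_ne_zero
      intro z hz
      by_contra hc
      push_neg at hc
      apply hz
      have : (z : V → F) = 0 := by
        funext v
        have := hc (e v) ⟨v, rfl⟩
        simpa [he] using this
      exact Subtype.ext this
    obtain ⟨t, hts, htspan, htli⟩ := exists_linearIndependent F (Set.range e)
    rw [hspan] at htspan
    -- t is finite of cardinality ≤ finrank X
    have htfin : t.Finite := htli.setFinite
    have htcard : t.ncard ≤ Module.finrank F X := by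
      have := htfin.fintype
      have h1 : Fintype.card t ≤ Module.finrank F (Module.Dual F X) :=
        htli.fintype_card_le_finrank
      rw [Subspace.dual_finrank_eq] at h1
      rwa [Set.ncard_eq_toFinset_card', Set.toFinset_card]
    -- pick coordinates realizing the functionals in t
    have hchoice : ∀ f : t, ∃ v : V, e v = (f : Module.Dual F X) := fun f => hts f.2
    choose g hg using hchoice
    refine ⟨Set.range g, ?_, ?_⟩
    · calc (Set.range g).ncard = Nat.card (Set.range g) := (Nat.card_coe_set_eq _).symm
        _ ≤ Nat.card t := by
            have := htfin.to_subtype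
            exact Finite.card_range_le g
        _ = t.ncard := Nat.card_coe_set_eq _
        _ ≤ _ := htcard
    · -- injectivity of restriction to A := range g on X
      have hinj : ∀ x : V → F, x ∈ X → (∀ a : (Set.range g : Set V), x a = 0) → x = 0 := by
        intro x hx h0
        have hxX : (⟨x, hx⟩ : X) = 0 := by
          rw [← Module.forall_dual_apply_eq_zero_iff F (⟨x, hx⟩ : X)]
          intro φ
          have hφ : φ ∈ Submodule.span F t := htspan ▸ Submodule.mem_top
          refine Submodule.span_induction ?_ ?_ ?_ ?_ hφ
          · intro f hf
            have : f = e (g ⟨f, hf⟩) := (hg ⟨f, hf⟩).symm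
            rw [this]
            have := h0 ⟨g ⟨f, hf⟩, Set.mem_range_self _⟩
            simpa [he] using this
          · simp
          · intro f₁ f₂ _ _ h1 h2; simp [h1, h2]
          · intro c f _ h1; simp [h1]
        simpa using congrArg Subtype.val hxX
      intro c
      rw [show ((1:ℕ) : ℕ∞) = 1 by norm_cast, Set.encard_le_one_iff]
      rintro _ _ ⟨p, ⟨hpX, hpc⟩, rfl⟩ ⟨q, ⟨hqX, hqc⟩, rfl⟩
      have hpq : p = q := by
        have h0 : p - q = 0 := by
          apply hinj _ (sub_mem hpX hqX)
          intro a
          simp [Pi.sub_apply, hpc a, hqc a]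
        have := sub_eq_zero.mp h0
        exact this
      rw [hpq]
  -- the defining set of cdim
  set S : Set ℕ :=
    {n : ℕ | ∃ A : Set V, A.ncard = n ∧ ∃ d : ℕ,
      Determines (X : Set (V → F)) A Set.univ d} with hS
  have hmem : A.ncard ∈ S := ⟨A, rfl, 1, hAdet⟩
  -- Step B: any member of S is ≥ finrank
  have hlb : ∀ m ∈ S, Module.finrank F X ≤ m := by
    rintro m ⟨B, rfl, d, hdet⟩
    have hBfin : B.Finite := B.toFinite
    have := hBfin.fintype
    -- the restriction map X → (B → F)
    set L : X →ₗ[F] (B → F) :=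
      (LinearMap.funLeft F F (Subtype.val : B → V)).comp X.subtype with hL
    have hLinj : Function.Injective L := by
      rw [← LinearMap.ker_eq_bot]
      rw [Submodule.eq_bot_iff]
      rintro ⟨x, hxX⟩ hx
      by_contra hne
      have hxne : x ≠ 0 := by
        intro h; exact hne (Subtype.ext h)
      have hx0 : ∀ b : B, x b = 0 := fun b => congrFun hx b
      -- the zero fiber is infinite
      have hbig : {y ∈ (X : Set (V → F)) | ∀ a : B, y a = (0 : ∀ a : B, F) a}.Infinite := by
        refine Set.infinite_of_injective_forall_mem
          (f := fun c : F => c • x) ?_ ?_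
        · intro c₁ c₂ hcc
          by_contra hne'
          simp only at hcc
          have : (c₁ - c₂) • x = 0 := by
            rw [sub_smul, hcc, sub_self]
          rcases smul_eq_zero.mp this with h | h
          · exact hne' (sub_eq_zero.mp h)
          · exact hxne h
        · intro c
          refine ⟨X.smul_mem c hxX, ?_⟩
          intro a
          simp [hx0 a]
      have := hdet (0 : ∀ a : B, F)
      rw [hres.encard_image] at this
      rw [hbig.encard_eq] at this
      simp at this
    have : Module.finrank F X ≤ Module.finrank F (B → F) :=
      LinearMap.finrank_le_finrank_of_injective hLinj
    have hcard : Fintype.card B = B.ncard := by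
      rw [Set.ncard_eq_toFinset_card', Set.toFinset_card]
    rwa [Module.finrank_pi, hcard] at this
  refine le_antisymm ?_ ?_
  · have hne : S.Nonempty := ⟨_, hmem⟩
    exact hlb _ (Nat.sInf_mem hne)
  · exact le_trans (Nat.sInf_le hmem) hAcard
end

section
/- Let T be a finite set, for each v ∈ T let X_v be a set, and let X ⊆ ∏_{v∈T} X_v. Let ≺ be a tree order on T and let M be the set of maximal elements of (T, ≺). Suppose that for every v ∈ T \ M and for every immediate successor w of v, x_{{w} ∪ T_{≻w}} d-determines x_{{v}}, where T_{≻w} = {u ∈ T : w ≺ u}. Then x_M d^{|T \ M|}-determines x_{T \ M}. -/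
/-! Determination composes multiplicatively: if `x_A` `d₁`-determines `x_B` and `x_{A ∪ B}`
`d₂`-determines `x_C`, then `x_A` `d₁ d₂`-determines `x_{B ∪ C}`. Add the non-maximal vertices to
`x_M` from the top down. When `v` is added, pick an immediate successor `w` of `v`: all vertices
in `{w} ∪ T_{≻w}` are already known, so `x_v` costs a factor `d`. -/

open Set

lemma Set.encard_le_encard_image_mul {α β : Type*} {s : Set α} {f : α → β} {k : ℕ∞}
    (himage : (f '' s).Finite) (hfiber : ∀ b ∈ f '' s, {a ∈ s | f a = b}.encard ≤ k) :
    s.encard ≤ (f '' s).encard * k := by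
  classical
  calc s.encard ≤ (⋃ b ∈ himage.toFinset, {a ∈ s | f a = b}).encard :=
        encard_le_encard fun a ha => mem_biUnion (by simpa using mem_image_of_mem f ha) ⟨ha, rfl⟩
    _ ≤ ∑ b ∈ himage.toFinset, {a ∈ s | f a = b}.encard := Finset.set_encard_biUnion_le _ _
    _ ≤ ∑ _b ∈ himage.toFinset, k := Finset.sum_le_sum fun b hb => hfiber b (by simpa using hb)
    _ = (f '' s).encard * k := by
        rw [Finset.sum_const, nsmul_eq_mul, himage.encard_eq_coe_toFinset_card]

section Determines

variable {V : Type*} {F : V → Type*} {S : Set (∀ v, F v)} {A A' B C : Set V} {d d₁ d₂ : ℕ}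

lemma determines_of_subset (h : B ⊆ A) : Determines S A B 1 := by
  intro c
  rw [Nat.cast_one, encard_le_one_iff]
  rintro _ _ ⟨x, ⟨-, hx⟩, rfl⟩ ⟨y, ⟨-, hy⟩, rfl⟩
  funext b
  exact (hx ⟨b, h b.2⟩).trans (hy ⟨b, h b.2⟩).symm

lemma Determines.mono_left (h : A ⊆ A') (hd : Determines S A B d) : Determines S A' B d := by
  intro c
  refine (encard_le_encard (image_mono ?_)).trans (hd fun a => c ⟨a, h a.2⟩)
  rintro x ⟨hxS, hx⟩
  exact ⟨hxS, fun a => hx ⟨a, h a.2⟩⟩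

lemma Determines.union (h₁ : Determines S A B d₁) (h₂ : Determines S (A ∪ B) C d₂) :
    Determines S A (B ∪ C) (d₁ * d₂) := by
  intro c
  set P := (fun x : ∀ v, F v => fun u : ↥(B ∪ C) => x u) '' {x ∈ S | ∀ a : A, x a = c a}
  let restrictB : (∀ u : ↥(B ∪ C), F u) → ∀ b : B, F b := fun y b => y ⟨b, Or.inl b.2⟩
  let restrictC : (∀ u : ↥(B ∪ C), F u) → ∀ b : C, F b := fun y b => y ⟨b, Or.inr b.2⟩
  have himage : (restrictB '' P).encard ≤ d₁ := by
    refine (encard_le_encard ?_).trans (h₁ c)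
    rintro _ ⟨_, ⟨x, hx, rfl⟩, rfl⟩
    exact ⟨x, hx, rfl⟩
  -- A fibre of `restrictB` comes from points agreeing on `A ∪ B` with one point `x₀`, and
  -- restriction to `C` is injective on it.
  have hfiber : ∀ b ∈ restrictB '' P, {y ∈ P | restrictB y = b}.encard ≤ d₂ := by
    rintro _ ⟨_, ⟨x₀, ⟨-, hx₀⟩, rfl⟩, rfl⟩
    have hinj : InjOn restrictC {y ∈ P | restrictB y = restrictB (fun u => x₀ u)} := by
      rintro y ⟨-, hy⟩ y' ⟨-, hy'⟩ hyy'
      funext ⟨u, hu⟩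
      rcases hu with hu | hu
      · exact (congrFun hy ⟨u, hu⟩).trans (congrFun hy' ⟨u, hu⟩).symm
      · exact congrFun hyy' ⟨u, hu⟩
    rw [← hinj.encard_image]
    refine (encard_le_encard ?_).trans (h₂ fun a => x₀ a)
    rintro _ ⟨_, ⟨⟨x, ⟨hxS, hx⟩, rfl⟩, hxB⟩, rfl⟩
    refine ⟨x, ⟨hxS, fun ⟨a, ha⟩ => ?_⟩, rfl⟩
    rcases ha with ha | ha
    · exact (hx ⟨a, ha⟩).trans (hx₀ ⟨a, ha⟩).symm
    · exact congrFun hxB ⟨a, ha⟩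
  calc P.encard ≤ (restrictB '' P).encard * d₂ :=
        encard_le_encard_image_mul (finite_of_encard_le_coe himage) hfiber
    _ ≤ d₁ * d₂ := by gcongr
    _ = (d₁ * d₂ : ℕ) := by push_cast; rfl

theorem determines_pow_card_of_determines_above [Preorder V] (B : Finset V)
    (h : ∀ v ∈ B, Determines S (A ∪ {u | u ∈ B ∧ v < u}) {v} d) :
    Determines S A B (d ^ B.card) := by
  classical
  induction B using Finset.strongInduction with
  | H B ih =>
  obtain rfl | hB := B.eq_empty_or_nonempty
  · simpa using determines_of_subset (empty_subset A)
  obtain ⟨v, hvB, hvmin⟩ := B.exists_minimal hB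
  have hnotlt : ∀ u ∈ B, ¬ u < v := fun u hu huv => huv.not_ge (hvmin hu huv.le)
  have hrest : Determines S A (B.erase v) (d ^ (B.erase v).card) := by
    refine ih _ (B.erase_ssubset hvB) fun u hu => (h u (B.mem_of_mem_erase hu)).mono_left ?_
    rintro t (ht | ⟨htB, hut⟩)
    · exact Or.inl ht
    · refine Or.inr ⟨Finset.mem_erase.2 ⟨?_, htB⟩, hut⟩
      rintro rfl
      exact hnotlt u (B.mem_of_mem_erase hu) hut
  have hv : Determines S (A ∪ (B.erase v : Set V)) {v} d := by
    refine (h v hvB).mono_left (union_subset_union_right A ?_)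
    rintro t ⟨htB, hvt⟩
    exact Finset.mem_erase.2 ⟨hvt.ne', htB⟩
  have hunion := hrest.union hv
  rwa [union_singleton, ← Finset.coe_insert, Finset.insert_erase hvB, ← pow_succ,
    Finset.card_erase_add_one hvB] at hunion

end Determines

theorem tree_lemma_general {T : Type*} [Fintype T] [PartialOrder T]
    {F : T → Type*} (S : Set (∀ v, F v)) (d : ℕ)
    (M : Set T) (hM : M = {v : T | ∀ w : T, ¬ v < w})
    (hdet : ∀ v ∉ M, ∀ w : T, v < w → (¬ ∃ u : T, v < u ∧ u < w) →
      Determines S ({w} ∪ {u : T | w < u}) {v} d) :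
    Determines S M Mᶜ (d ^ Mᶜ.ncard) := by
  classical
  have hstep : ∀ v ∈ Mᶜ.toFinset, Determines S (M ∪ {u | u ∈ Mᶜ.toFinset ∧ v < u}) {v} d := by
    intro v hv
    rw [mem_toFinset] at hv
    obtain ⟨u, hvu⟩ : ∃ u, v < u := by simpa [hM] using hv
    obtain ⟨w, hvw, -⟩ := exists_covBy_le_of_lt hvu
    refine (hdet v hv w hvw.lt fun ⟨u, hvu, huw⟩ => hvw.2 hvu huw).mono_left ?_
    intro t ht
    have hvt : v < t := ht.elim (fun h => h ▸ hvw.lt) hvw.lt.trans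
    by_cases htM : t ∈ M
    · exact Or.inl htM
    · exact Or.inr ⟨mem_toFinset.2 htM, hvt⟩
  simpa [ncard_eq_toFinset_card'] using determines_pow_card_of_determines_above _ hstep

/-- Tree Lemma: let `≺` (given by `<` of a partial order) be a tree order on the
finite set `T` (every down-set `{w | w < v}` is linearly ordered and there is
exactly one minimal element), and let `M` be the set of maximal elements.  If for
every `v ∉ M` and every immediate successor `w` of `v` we have that
`x_{{w} ∪ T_{≻ w}}` `d`-determines `x_{v}`, then `x_M` `d^{|T \ M|}`-determines
`x_{T \ M}`. -/
theorem tree_lemma {T : Type*} [Fintype T] [PartialOrder T]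
    {F : T → Type*} (S : Set (∀ v, F v)) (d : ℕ)
    (hchain : ∀ v a b : T, a < v → b < v → a ≤ b ∨ b ≤ a)
    (hmin : ∃! m : T, ∀ t : T, ¬ t < m)
    (M : Set T) (hM : M = {v : T | ∀ w : T, ¬ v < w})
    (hdet : ∀ v ∉ M, ∀ w : T, v < w → (¬ ∃ u : T, v < u ∧ u < w) →
      Determines S ({w} ∪ {u : T | w < u}) {v} d) :
    Determines S M Mᶜ (d ^ Mᶜ.ncard) :=
  tree_lemma_general S d M hM hdet
end

section
/- Let G = (V, E) be a finite simple graph that is a forest (acyclic) with no isolated vertices, and let X ⊆ ∏_{v∈V} X_v be d-compatible with G. Let L ⊆ V be a set obtained by choosing, from each connected component of G, all of its leaves except exactly one. Then x_L d^{|V \ L|}-determines x_{V \ L}; in particular cdim(X) ≤ |L|. -/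
/-- `S` is `d`-compatible with the graph `G`. -/
def Compatible {V : Type*} {F : V → Type*} (S : Set (∀ v, F v))
    (G : SimpleGraph V) (d : ℕ) : Prop :=
  ∀ v w, G.Adj v w →
    Determines S ((insert v (G.neighborSet v)) \ {w}) {w} d

lemma Set.encard_biUnion_le_mul {ι α : Type*} {t : Set ι} {s : ι → Set α} {e m : ℕ}
    (ht : t.encard ≤ e) (hs : ∀ i ∈ t, (s i).encard ≤ m) :
    (⋃ i ∈ t, s i).encard ≤ (e * m : ℕ) := by
  have htfin := Set.finite_of_encard_le_coe ht
  calc (⋃ i ∈ t, s i).encard ≤ ∑ i ∈ htfin.toFinset, (s i).encard := by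
        simpa using htfin.toFinset.set_encard_biUnion_le s
    _ ≤ ∑ _i ∈ htfin.toFinset, (m : ℕ∞) := Finset.sum_le_sum fun i hi => hs i (by simpa using hi)
    _ = t.encard * m := by simp [htfin.encard_eq_coe_toFinset_card]
    _ ≤ e * m := by gcongr
    _ = (e * m : ℕ) := by push_cast; rfl

namespace Determines

variable {V : Type*} {F : V → Type*} {S : Set (∀ v, F v)} {A A' B B' C : Set V} {d e m : ℕ}

lemma mono (h : Determines S A B d) (hA : A ⊆ A') (hB : B' ⊆ B) : Determines S A' B' d := by
  intro c
  refine le_trans (le_trans (Set.encard_le_encard ?_) (Set.encard_image_le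
    (fun y : (∀ b : B, F b) => fun b : B' => y ⟨b, hB b.2⟩) _)) (h fun a => c ⟨a, hA a.2⟩)
  rintro y ⟨x, ⟨hxS, hxc⟩, rfl⟩
  exact ⟨fun b : B => x b, ⟨x, ⟨hxS, fun a => hxc ⟨a, hA a.2⟩⟩, rfl⟩, rfl⟩

lemma of_subset (hB : B ⊆ A) : Determines S A B 1 := by
  intro c
  rw [Nat.cast_one, Set.encard_le_one_iff]
  rintro _ _ ⟨x, ⟨-, hx⟩, rfl⟩ ⟨y, ⟨-, hy⟩, rfl⟩
  funext b
  exact (hx ⟨b, hB b.2⟩).trans (hy ⟨b, hB b.2⟩).symm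

lemma trans (hB : Determines S A B e) (hC : Determines S (A ∪ B) C m) :
    Determines S A C (e * m) := by
  classical
  intro c
  let glue (b : ∀ v : B, F v) (a : ↥(A ∪ B)) : F a :=
    if h : (a : V) ∈ A then c ⟨a, h⟩ else b ⟨a, a.2.resolve_left h⟩
  let T := {x ∈ S | ∀ a : A, x a = c a}
  have hcover : (fun x : ∀ v, F v => fun v : C => x v) '' T ⊆
      ⋃ b ∈ (fun x : ∀ v, F v => fun v : B => x v) '' T,
        (fun x : ∀ v, F v => fun v : C => x v) '' {x ∈ S | ∀ a : ↥(A ∪ B), x a = glue b a} := by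
    rintro _ ⟨x, hx, rfl⟩
    refine Set.mem_biUnion ⟨x, hx, rfl⟩ ⟨x, ⟨hx.1, fun a => ?_⟩, rfl⟩
    by_cases ha : (a : V) ∈ A
    · simpa [glue, ha] using hx.2 ⟨a, ha⟩
    · simp [glue, ha]
  exact (Set.encard_le_encard hcover).trans
    (Set.encard_biUnion_le_mul (hB c) fun b _ => hC (glue b))

lemma union_s6 (hB : Determines S A B e) (hC : Determines S A C m) :
    Determines S A (B ∪ C) (e * m) := by
  have hBC : Determines S (A ∪ B) (B ∪ C) m := by
    simpa using (hC.mono Set.subset_union_left subset_rfl).trans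
      (of_subset (Set.union_subset_union_left C Set.subset_union_right))
  exact hB.trans hBC

lemma of_forall_singleton (hB : B.Finite) (h : ∀ w ∈ B, Determines S A {w} d) :
    Determines S A B (d ^ B.ncard) := by
  induction B, hB using Set.Finite.induction_on with
  | empty => simpa using of_subset (Set.empty_subset A)
  | @insert a s ha hs ih =>
    rw [Set.ncard_insert_of_notMem ha hs, pow_succ', Set.insert_eq]
    exact (h a (Set.mem_insert a s)).union_s6 (ih fun w hw => h w (Set.mem_insert_of_mem a hw))

lemma univ_of_rank [Finite V] {L : Set V} (f : V → ℕ)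
    (h : ∀ w ∉ L, Determines S (L ∪ {u | f w < f u}) {w} d) :
    Determines S L Set.univ (d ^ Lᶜ.ncard) := by
  let A (k : ℕ) : Set V := L ∪ {u | k ≤ f u}
  have hA : ∀ k, Determines S (A k) Set.univ (d ^ (A k)ᶜ.ncard) := by
    intro k
    induction k with
    | zero => simpa [A] using of_subset (Set.subset_univ Set.univ)
    | succ k ih =>
      have hsub : A (k + 1) ⊆ A k := Set.union_subset_union_right L fun u hu => by
        simp only [Set.mem_ofPred_eq] at hu ⊢; omega
      have hlevel : Determines S (A (k + 1)) (A k \ A (k + 1)) (d ^ (A k \ A (k + 1)).ncard) :=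
        of_forall_singleton (Set.toFinite _) fun w ⟨hwk, hwk1⟩ => by
          simp only [A, Set.mem_union, Set.mem_ofPred_eq, not_or, not_le] at hwk hwk1
          have hfw : f w = k := by have := hwk.resolve_left hwk1.1; omega
          exact (h w hwk1.1).mono (Set.union_subset_union_right L fun u hu => by
            simp only [Set.mem_ofPred_eq] at hu ⊢; omega) subset_rfl
      have hcard : (A (k + 1))ᶜ.ncard = (A k \ A (k + 1)).ncard + (A k)ᶜ.ncard := by
        rw [← compl_sdiff_compl, Set.ncard_sdiff_add_ncard_of_subset (Set.compl_subset_compl.mpr hsub)]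
      rw [hcard, pow_add]
      exact hlevel.trans (by rwa [Set.union_sdiff_cancel hsub])
  obtain ⟨N, hN⟩ := Finite.exists_le f
  have hAL : A (N + 1) = L := by
    ext v
    have := hN v
    simp only [A, Set.mem_union, Set.mem_ofPred_eq, or_iff_left_iff_imp]
    omega
  simpa [hAL] using hA (N + 1)

end Determines

namespace SimpleGraph

variable {V : Type*} {G : SimpleGraph V} {r u u' v w : V}

lemma Walk.dist_le_length_of_mem_support [DecidableEq V] (p : G.Walk r u) (hv : v ∈ p.support) :
    G.dist r v ≤ p.length :=
  (dist_le _).trans (p.length_takeUntil_le_length hv)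

lemma Reachable.exists_adj_dist_lt (hr : G.Reachable r w) (hne : w ≠ r) :
    ∃ u, G.Adj w u ∧ G.dist r u < G.dist r w := by
  obtain ⟨p, hp⟩ := hr.symm.exists_walk_length_eq_dist
  cases p with
  | nil => exact absurd rfl hne
  | cons hadj q =>
    refine ⟨_, hadj, ?_⟩
    have := dist_le q
    rw [Walk.length_cons] at hp
    rw [dist_comm, dist_comm (u := r)]
    omega

lemma IsAcyclic.eq_of_adj_of_dist_lt (hG : G.IsAcyclic) (hu : G.Adj v u) (hu' : G.Adj v u')
    (hdu : G.dist r u < G.dist r v) (hdu' : G.dist r u' < G.dist r v) : u = u' := by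
  classical
  have hrv : G.Reachable r v := Reachable.of_dist_ne_zero (by omega)
  obtain ⟨p, hp, hpl⟩ := (hrv.trans hu.reachable).exists_path_of_dist
  obtain ⟨p', hp', hpl'⟩ := (hrv.trans hu'.reachable).exists_path_of_dist
  have hvp : v ∉ p.support := fun hv => by
    have := p.dist_le_length_of_mem_support hv; omega
  have hvp' : v ∉ p'.support := fun hv => by
    have := p'.dist_le_length_of_mem_support hv; omega
  have hP : (p.concat hu.symm).IsPath := hp.concat hvp hu.symm
  have hu'P : u' ∈ (p.concat hu.symm).support := by
    by_contra hu'P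
    exact hvp' (hG.mem_support_of_ne_mem_support_of_adj_of_isPath hp' hP hu'.symm hu'P)
  rw [hG.eq_penultimate_of_adj_end hP hu' hu'P, Walk.penultimate_concat]

lemma IsAcyclic.exists_adj_dist_eq_add_one (hG : G.IsAcyclic) (hr : G.Reachable r w)
    (hnb : (G.neighborSet r).Nonempty) (hdeg : w ≠ r → (G.neighborSet w).ncard ≠ 1) :
    ∃ v, G.Adj w v ∧ G.dist r v = G.dist r w + 1 := by
  by_cases hwr : w = r
  · subst hwr
    obtain ⟨v, hv⟩ := hnb
    exact ⟨v, hv, by simpa using dist_eq_one_iff_adj.mpr hv⟩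
  obtain ⟨u, hu, hdu⟩ := hr.exists_adj_dist_lt hwr
  obtain ⟨v, hv, hvu⟩ : ∃ v ∈ G.neighborSet w, v ≠ u := by
    by_contra! hall
    exact hdeg hwr (Set.ncard_eq_one.mpr ⟨u, Set.eq_singleton_iff_unique_mem.mpr ⟨hu, hall⟩⟩)
  rcases hG.dist_eq_dist_add_one_of_adj_of_reachable r hv hr with hvw | hwv
  · exact absurd (hG.eq_of_adj_of_dist_lt hv hu (by omega) hdu) hvu
  · exact ⟨v, hv, hwv⟩

lemma IsAcyclic.dist_lt_of_mem_closedNeighborSet (hG : G.IsAcyclic) (hr : G.Reachable r w)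
    (hwv : G.Adj w v) (hv : G.dist r v = G.dist r w + 1) :
    ∀ u ∈ insert v (G.neighborSet v) \ {w}, G.dist r w < G.dist r u := by
  rintro u ⟨rfl | hvu, huw⟩
  · omega
  · have hvu : G.Adj v u := hvu
    rcases hG.dist_eq_dist_add_one_of_adj_of_reachable r hvu (hr.trans hwv.reachable) with h | h
    · exact absurd (hG.eq_of_adj_of_dist_lt (r := r) hvu hwv.symm (by omega) (by omega)) huw
    · omega

end SimpleGraph

theorem pure_forest_bound_general {V : Type*} [Fintype V] (G : SimpleGraph V)
    {F : V → Type*} (S : Set (∀ v, F v)) (d : ℕ)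
    (hacyc : G.IsAcyclic)
    (hcomp : Compatible S G d)
    (L : Set V)
    (hchoice : ∀ v : V, ∃! w : V,
      G.Reachable v w ∧ (G.neighborSet w).ncard = 1 ∧ w ∉ L) :
    Determines S L Lᶜ (d ^ Lᶜ.ncard) ∧ cdim S ≤ L.ncard := by
  choose root hroot hroot_unique using hchoice
  have root_eq {u w : V} (h : G.Reachable w u) : root u = root w :=
    (hroot_unique u (root w) ⟨h.symm.trans (hroot w).1, (hroot w).2⟩).symm
  have hL : Determines S L Set.univ (d ^ Lᶜ.ncard) :=
    Determines.univ_of_rank (fun v => G.dist (root v) v) fun w hwL => by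
      have hrw : G.Reachable (root w) w := (hroot w).1.symm
      obtain ⟨v, hwv, hv⟩ := hacyc.exists_adj_dist_eq_add_one hrw
        (Set.nonempty_of_ncard_ne_zero (by rw [(hroot w).2.1]; exact one_ne_zero))
        fun hne hdeg => hne (hroot_unique w w ⟨.rfl, hdeg, hwL⟩)
      refine (hcomp v w hwv.symm).mono (fun u hu => Or.inr ?_) subset_rfl
      have hdist := hacyc.dist_lt_of_mem_closedNeighborSet hrw hwv hv u hu
      have hru : G.Reachable (root w) u := SimpleGraph.Reachable.of_dist_ne_zero (by omega)
      rwa [Set.mem_ofPred_eq, root_eq (hrw.symm.trans hru)]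
  exact ⟨hL.mono subset_rfl (Set.subset_univ _), Nat.sInf_le ⟨L, rfl, _, hL⟩⟩

/-- Pure Forest Bound: let `G` be a forest with no isolated vertices and `S` be
`d`-compatible with `G`.  If `L` consists of leaves of `G` and from each connected
component of `G` exactly one leaf is excluded from `L`, then `x_L`
`d^{|V \ L|}`-determines `x_{V \ L}`; in particular `cdim S ≤ |L|`. -/
theorem pure_forest_bound {V : Type*} [Fintype V] (G : SimpleGraph V)
    {F : V → Type*} (S : Set (∀ v, F v)) (d : ℕ)
    (hacyc : G.IsAcyclic)
    (hniso : ∀ v : V, (G.neighborSet v).Nonempty)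
    (hcomp : Compatible S G d)
    (L : Set V)
    (hleaf : ∀ v ∈ L, (G.neighborSet v).ncard = 1)
    (hchoice : ∀ v : V, ∃! w : V,
      G.Reachable v w ∧ (G.neighborSet w).ncard = 1 ∧ w ∉ L) :
    Determines S L Lᶜ (d ^ Lᶜ.ncard) ∧ cdim S ≤ L.ncard :=
  pure_forest_bound_general G S d hacyc hcomp L hchoice
end

section
/- Let G = (V, E) be a finite simple graph, for each v ∈ V let X_v be a set, and let X ⊆ ∏_{v∈V} X_v be strongly d-compatible with G. Then for every independent set S ⊆ V of G, cdim(X) ≤ |V| − |S|. -/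
/-- `S` is strongly `d`-compatible with the graph `G`. -/
def StronglyCompatible {V : Type*} {F : V → Type*} (S : Set (∀ v, F v))
    (G : SimpleGraph V) (d : ℕ) : Prop :=
  Compatible S G d ∧ ∀ v, Determines S (G.neighborSet v) {v} d

/-- If `S` is strongly `d`-compatible with `G`, then for every independent set
`I` of `G` we have `cdim S ≤ |V| - |I|`. -/
theorem cdim_le_of_independent {V : Type*} [Fintype V] (G : SimpleGraph V)
    {F : V → Type*} (S : Set (∀ v, F v)) (d : ℕ)
    (hcomp : StronglyCompatible S G d)
    (I : Set V) (hI : ∀ v ∈ I, ∀ w ∈ I, ¬ G.Adj v w) :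
    cdim S ≤ Fintype.card V - I.ncard := by
  classical
  have hNsub : ∀ v ∈ I, (G.neighborSet v : Set V) ⊆ Iᶜ := by
    intro v hv w hw hwI
    exact hI v hv w hwI hw
  have hdet : Determines S Iᶜ Set.univ (d ^ I.ncard) := by
    intro c
    set T : Set (∀ v, F v) := {x ∈ S | ∀ a : ↥(Iᶜ), x ↑a = c a} with hT
    have hinj : Set.InjOn (fun x : ∀ v, F v => fun b : (Set.univ : Set V) => x b) T := by
      intro x _ y _ h
      funext v
      exact congrFun h ⟨v, Set.mem_univ v⟩
    rw [hinj.encard_image]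
    -- the candidate-value sets
    set Y : ∀ v : I, Set (F v) := fun v =>
      (fun x : ∀ u, F u => x ↑v) ''
        {x ∈ S | ∀ a : (G.neighborSet (v : V) : Set V), x ↑a = c ⟨↑a, hNsub ↑v v.2 a.2⟩}
      with hYdef
    have hY : ∀ v : I, (Y v).encard ≤ (d : ℕ∞) := by
      intro v
      have h := hcomp.2 ↑v (fun a => c ⟨↑a, hNsub ↑v v.2 a.2⟩)
      refine le_trans ?_ h
      have : Y v = (fun g : ∀ b : ({(v : V)} : Set V), F ↑b => g ⟨↑v, rfl⟩) ''
          ((fun x : ∀ u, F u => fun b : ({(v : V)} : Set V) => x ↑b) ''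
            {x ∈ S | ∀ a : (G.neighborSet (v : V) : Set V), x ↑a = c ⟨↑a, hNsub ↑v v.2 a.2⟩}) := by
        rw [Set.image_image]
      rw [this]
      exact Set.encard_image_le _ _
    -- restriction to I is injective on T
    have hrinj : Set.InjOn (fun x : ∀ u, F u => fun v : I => x ↑v) T := by
      intro x hx y hy h
      funext u
      by_cases hu : u ∈ I
      · exact congrFun h ⟨u, hu⟩
      · rw [hx.2 ⟨u, hu⟩, hy.2 ⟨u, hu⟩]
    have hsub : (fun x : ∀ u, F u => fun v : I => x ↑v) '' T ⊆ Set.univ.pi Y := by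
      rintro _ ⟨x, hx, rfl⟩ v _
      exact ⟨x, ⟨hx.1, fun a => hx.2 ⟨↑a, hNsub ↑v v.2 a.2⟩⟩, rfl⟩
    have hfinY : ∀ v : I, (Y v).Finite := fun v =>
      ((Set.encard_le_coe_iff_finite_ncard_le).1 (hY v)).1
    have hncY : ∀ v : I, (Y v).ncard ≤ d := fun v =>
      ((Set.encard_le_coe_iff_finite_ncard_le).1 (hY v)).2
    have hfinpi : (Set.univ.pi Y).Finite := by
      have h1 : ∀ v : I, Finite (Y v) := fun v => (hfinY v).to_subtype
      have h2 : Finite (∀ v : I, Y v) := Pi.finite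
      have h3 : Finite ↥(Set.univ.pi Y) := Finite.of_equiv _ (Equiv.Set.univPi Y).symm
      exact Set.finite_coe_iff.1 h3
    have hcard : (Set.univ.pi Y).ncard ≤ d ^ I.ncard := by
      rw [← Nat.card_coe_set_eq, Nat.card_congr (Equiv.Set.univPi Y), Nat.card_pi]
      calc ∏ v : I, Nat.card (Y v) ≤ ∏ _v : I, d := by
              refine Finset.prod_le_prod' fun v _ => ?_
              rw [Nat.card_coe_set_eq]; exact hncY v
        _ = d ^ Fintype.card I := by rw [Finset.prod_const, Finset.card_univ]
        _ = d ^ I.ncard := by rw [← Nat.card_coe_set_eq, Nat.card_eq_fintype_card]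
    calc T.encard = ((fun x : ∀ u, F u => fun v : I => x ↑v) '' T).encard :=
            (hrinj.encard_image).symm
      _ ≤ (Set.univ.pi Y).encard := Set.encard_le_encard hsub
      _ ≤ ((d ^ I.ncard : ℕ) : ℕ∞) :=
            Set.encard_le_coe_iff_finite_ncard_le.2 ⟨hfinpi, hcard⟩
  have hIc : Iᶜ.ncard = Fintype.card V - I.ncard := by
    have h := Set.ncard_add_ncard_compl I (Set.toFinite I) (Set.toFinite Iᶜ)
    rw [Nat.card_eq_fintype_card] at h
    omega
  calc cdim S ≤ Iᶜ.ncard := Nat.sInf_le ⟨Iᶜ, rfl, d ^ I.ncard, hdet⟩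
    _ = Fintype.card V - I.ncard := hIc
end

section
/- Let G = (V, E) be a finite simple graph and let λ ∈ ℝ be an eigenvalue of the Laplacian matrix of G, with multiplicity mult(λ) = dim_ℝ {x ∈ ℝ^V : Lx = λx}. Let W ⊆ V be an induced forest of G with no isolated vertices, with l leaves and c connected components. Then mult(λ) ≤ |V| − |W| + l − c. -/
/-!
An eigenvector `x` of the Laplacian is determined by its values on
`S = (V \ W) ∪ (leaves of W, except one chosen leaf in each component)`, so the eigenspace
embeds into `ℝ^S` and `mult μ ≤ |S| = |V| - |W| + l - c`.
If `x` vanishes on `S`, then on `W` it satisfies `∑_{w ∼ v, w ∈ W} x w = (deg v - μ) x v`.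
Prune each tree of `W` from its leaves towards the chosen leaf `r`: once `x` vanishes at a
vertex `u` and at all neighbours of `u` but the one, `v`, on the path to `r`, the relation at `u`
gives `x v = 0`.
-/

theorem Submodule.finrank_le_ncard_of_forall_eq_zero {R ι : Type*} [Ring R]
    [StrongRankCondition R] [Finite ι] (E : Submodule R (ι → R)) (S : Set ι)
    (hS : ∀ x ∈ E, (∀ i ∈ S, x i = 0) → x = 0) : Module.finrank R E ≤ S.ncard := by
  have : Fintype S := Fintype.ofFinite S
  let restrict : E →ₗ[R] S → R := (LinearMap.funLeft R R Subtype.val).comp E.subtype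
  have hinj : Function.Injective restrict := by
    refine (injective_iff_map_eq_zero restrict).mpr fun x hx => Subtype.ext ?_
    exact hS x x.2 fun i hi => congrFun hx ⟨i, hi⟩
  calc Module.finrank R E ≤ Module.finrank R (S → R) :=
        LinearMap.finrank_le_finrank_of_injective hinj
    _ = S.ncard := by rw [Module.finrank_pi, ← Nat.card_eq_fintype_card, Nat.card_coe_set_eq]

theorem Set.ncard_compl_union_sdiff {α : Type*} [Fintype α] {R L W : Set α} (hRL : R ⊆ L)
    (hLW : L ⊆ W) :
    ((Wᶜ ∪ (L \ R)).ncard : ℤ) = Fintype.card α - W.ncard + L.ncard - R.ncard := by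
  rw [Set.ncard_union_eq (disjoint_compl_left.mono_right (Set.sdiff_subset.trans hLW)),
    Set.ncard_sdiff hRL, ← Nat.card_eq_fintype_card, ← Set.ncard_add_ncard_compl W,
    Nat.cast_add, Nat.cast_sub (Set.ncard_le_ncard hRL)]
  push_cast
  ring

namespace SimpleGraph

variable {V : Type*} [DecidableEq V] {G : SimpleGraph V}

theorem IsAcyclic.cons_isPath_of_ne_getVert_one (hG : G.IsAcyclic) {u v r : V}
    (huv : G.Adj v u) {p : G.Walk v r} (hp : p.IsPath) (hu : u ≠ p.getVert 1) :
    (Walk.cons huv.symm p).IsPath := by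
  refine (Walk.cons_isPath_iff _ _).mpr ⟨hp, fun hmem => hu ?_⟩
  -- by uniqueness of paths, the part of `p` up to `u` is the edge `vu`
  have htake : p.takeUntil u hmem = .cons huv .nil :=
    congrArg Subtype.val <|
      (hG.subsingleton_path v u).elim ⟨_, hp.takeUntil hmem⟩ ⟨_, by simp [huv.ne]⟩
  rw [← p.take_spec hmem, htake]
  simp

variable [Fintype V] [DecidableRel G.Adj]

theorem IsAcyclic.exists_adj_cons_isPath (hG : G.IsAcyclic) {v r : V} {p : G.Walk v r}
    (hp : p.IsPath) (hdeg : 0 < G.degree v) (hvr : v = r ∨ 2 ≤ G.degree v) :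
    ∃ u, ∃ huv : G.Adj v u, (Walk.cons huv.symm p).IsPath := by
  suffices ∃ u, G.Adj v u ∧ u ≠ p.getVert 1 from
    let ⟨u, huv, hu⟩ := this; ⟨u, huv, hG.cons_isPath_of_ne_getVert_one huv hp hu⟩
  rcases hvr with rfl | h2
  · obtain ⟨u, hu⟩ := (G.neighborFinset v).card_pos.mp hdeg
    rw [(Walk.isPath_iff_nil.mp hp).eq_nil]
    exact ⟨u, (G.mem_neighborFinset v u).mp hu, ((G.mem_neighborFinset v u).mp hu).ne'⟩
  · obtain ⟨u, hu, hne⟩ := Finset.exists_mem_ne h2 (p.getVert 1)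
    exact ⟨u, (G.mem_neighborFinset v u).mp hu, hne⟩

theorem IsAcyclic.eq_zero_of_sum_neighborFinset_eq_mul {R : Type*} [Semiring R]
    (hG : G.IsAcyclic) (hdeg : ∀ v, 0 < G.degree v) {x ψ : V → R}
    (hx : ∀ v, ∑ w ∈ G.neighborFinset v, x w = ψ v * x v) {r : V}
    (hleaf : ∀ v, G.Reachable v r → v ≠ r → G.degree v = 1 → x v = 0)
    {v : V} (hv : G.Reachable v r) : x v = 0 := by
  suffices ∀ n v (p : G.Walk v r), p.IsPath → Fintype.card V - p.length = n → x v = 0 from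
    this _ v _ hv.some.toPath.2 rfl
  intro n
  induction n using Nat.strong_induction_on with
  | _ n ih =>
    intro v p hp hn
    by_cases hvleaf : v ≠ r ∧ G.degree v = 1
    · exact hleaf v ⟨p⟩ hvleaf.1 hvleaf.2
    have hvr : v = r ∨ 2 ≤ G.degree v := (eq_or_ne v r).imp_right fun hne => by
      have := hdeg v; have := not_and.mp hvleaf hne; omega
    have hlen := hp.length_lt
    obtain ⟨u, huv, hq⟩ := hG.exists_adj_cons_isPath hp (hdeg v) hvr
    have hxu : x u = 0 := ih _ (by simp only [Walk.length_cons]; omega) u _ hq rfl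
    have hxw : ∀ w ∈ G.neighborFinset u, w ≠ v → x w = 0 := fun w hw hwv =>
      have huw := (G.mem_neighborFinset u w).mp hw
      ih _ (by have := hq.length_lt; simp only [Walk.length_cons] at this ⊢; omega) w _
        (hG.cons_isPath_of_ne_getVert_one huw hq (by simpa using hwv)) rfl
    calc x v = ∑ w ∈ G.neighborFinset u, x w :=
          (Finset.sum_eq_single_of_mem v ((G.mem_neighborFinset u v).mpr huv.symm) hxw).symm
      _ = 0 := by rw [hx u, hxu, mul_zero]

theorem IsAcyclic.exists_reachable_ne_degree_eq_one (hG : G.IsAcyclic)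
    (hdeg : ∀ v, 0 < G.degree v) (r : V) :
    ∃ v, G.Reachable v r ∧ v ≠ r ∧ G.degree v = 1 := by
  by_contra! h
  -- the constant function `1` satisfies the relation with `ψ = degree`
  have := hG.eq_zero_of_sum_neighborFinset_eq_mul hdeg (x := fun _ => (1 : ℕ))
    (ψ := fun v => G.degree v) (by simp) (fun v hv hne hd => absurd hd (h v hv hne)) .rfl
  exact one_ne_zero this

theorem IsAcyclic.exists_mem_supp_degree_eq_one (hG : G.IsAcyclic)
    (hdeg : ∀ v, 0 < G.degree v) (C : G.ConnectedComponent) :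
    ∃ v ∈ C.supp, G.degree v = 1 := by
  obtain ⟨r, rfl⟩ := C.exists_rep
  obtain ⟨v, hv, -, hdv⟩ := hG.exists_reachable_ne_degree_eq_one hdeg r
  exact ⟨v, ConnectedComponent.eq.mpr hv, hdv⟩

theorem sum_neighborFinset_eq_of_mem_eigenspace_lapMatrix {R : Type*} [CommRing R] {μ : R}
    {x : V → R} (hx : x ∈ Module.End.eigenspace (Matrix.toLin' (G.lapMatrix R)) μ) (v : V) :
    ∑ w ∈ G.neighborFinset v, x w = (G.degree v - μ) * x v := by
  have := congrFun (Module.End.mem_eigenspace_iff.mp hx) v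
  rw [Matrix.toLin'_apply, lapMatrix_mulVec_apply, Pi.smul_apply, smul_eq_mul] at this
  rw [sub_mul, ← this, sub_sub_cancel]

variable {W : Set V} [DecidablePred (· ∈ W)]

theorem degree_induce_eq_ncard (u : W) :
    (G.induce W).degree u = (G.neighborSet u ∩ W).ncard := by
  rw [← card_neighborFinset_eq_degree, ← Finset.card_map, map_neighborFinset_induce,
    Set.ncard_eq_toFinset_card', Set.toFinset_inter, neighborFinset_def]

theorem sum_neighborFinset_induce_eq {M : Type*} [AddCommMonoid M] {x : V → M}
    (hx : ∀ v ∉ W, x v = 0) (u : W) :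
    ∑ w ∈ (G.induce W).neighborFinset u, x w = ∑ w ∈ G.neighborFinset u, x w := by
  calc ∑ w ∈ (G.induce W).neighborFinset u, x w
      = ∑ w ∈ ((G.induce W).neighborFinset u).map (.subtype (· ∈ W)), x w :=
        (Finset.sum_map _ (.subtype (· ∈ W)) x).symm
    _ = ∑ w ∈ G.neighborFinset u ∩ W.toFinset, x w := by rw [map_neighborFinset_induce]
    _ = ∑ w ∈ G.neighborFinset u, x w :=
      Finset.sum_subset Finset.inter_subset_left fun w hw hnot =>
        hx w fun hwW => hnot (Finset.mem_inter.mpr ⟨hw, Set.mem_toFinset.mpr hwW⟩)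

theorem eq_zero_of_mem_eigenspace_lapMatrix_of_isAcyclic_induce {R : Type*} [CommRing R]
    (hW : (G.induce W).IsAcyclic) (hdeg : ∀ u, 0 < (G.induce W).degree u)
    (root : (G.induce W).ConnectedComponent → W) (hroot : ∀ C, root C ∈ C.supp)
    {μ : R} {x : V → R} (hx : x ∈ Module.End.eigenspace (Matrix.toLin' (G.lapMatrix R)) μ)
    (hout : ∀ v ∉ W, x v = 0)
    (hleaf : ∀ u, (G.induce W).degree u = 1 → u ∉ Set.range root → x u = 0) : x = 0 := by
  funext v
  by_cases hv : v ∉ W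
  · exact hout v hv
  rw [not_not] at hv
  set C := (G.induce W).connectedComponentMk ⟨v, hv⟩
  refine hW.eq_zero_of_sum_neighborFinset_eq_mul hdeg (x := fun u => x u)
    (ψ := fun u => G.degree u - μ) (r := root C) (fun u => ?_) (fun u hu hne hdu => ?_)
    (ConnectedComponent.exact (hroot C).symm)
  · rw [sum_neighborFinset_induce_eq hout, sum_neighborFinset_eq_of_mem_eigenspace_lapMatrix hx]
  · refine hleaf u hdu ?_
    rintro ⟨C', rfl⟩
    have : C' = C := (hroot C').symm.trans
      ((ConnectedComponent.sound hu).trans (hroot C))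
    exact hne (this ▸ rfl)

end SimpleGraph

theorem laplacian_mult_forest_bound_general {V : Type*} [Fintype V] [DecidableEq V]
    (G : SimpleGraph V) [DecidableRel G.Adj] (μ : ℝ)
    (W : Set V)
    (hforest : (G.induce W).IsAcyclic)
    (hniso : ∀ v ∈ W, (G.neighborSet v ∩ W).Nonempty)
    (l c : ℕ)
    (hl : l = {v | v ∈ W ∧ (G.neighborSet v ∩ W).ncard = 1}.ncard)
    (hc : c = Nat.card (G.induce W).ConnectedComponent) :
    (Module.finrank ℝ
        (Module.End.eigenspace (Matrix.toLin' (G.lapMatrix ℝ)) μ) : ℤ)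
      ≤ (Fintype.card V : ℤ) - W.ncard + l - c := by
  classical
  have hdeg (u : W) := G.degree_induce_eq_ncard u
  have hdeg_pos (u : W) : 0 < (G.induce W).degree u :=
    hdeg u ▸ (Set.ncard_pos (Set.toFinite _)).mpr (hniso u u.2)
  choose root hroot hroot_deg using hforest.exists_mem_supp_degree_eq_one hdeg_pos
  have hroot_inj : root.Injective := fun C C' h =>
    (hroot C).symm.trans (h ▸ hroot C')
  set L := {v | v ∈ W ∧ (G.neighborSet v ∩ W).ncard = 1}
  set R := Subtype.val '' Set.range root
  have hRL : R ⊆ L := by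
    rintro _ ⟨_, ⟨C, rfl⟩, rfl⟩
    exact ⟨(root C).2, (hdeg _).symm.trans (hroot_deg C)⟩
  have hrank : Module.finrank ℝ (Module.End.eigenspace (Matrix.toLin' (G.lapMatrix ℝ)) μ)
      ≤ (Wᶜ ∪ (L \ R)).ncard :=
    Submodule.finrank_le_ncard_of_forall_eq_zero _ _ fun x hx hS =>
      SimpleGraph.eq_zero_of_mem_eigenspace_lapMatrix_of_isAcyclic_induce hforest hdeg_pos root
        hroot hx (fun v hv => hS v (.inl hv)) fun u hu hu_root => hS u <| .inr
          ⟨⟨u.2, (hdeg u).symm.trans hu⟩,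
            fun ⟨u', hu', h⟩ => hu_root (Subtype.ext h ▸ hu')⟩
  have hR : R.ncard = c := by
    rw [hc, Set.ncard_image_of_injective _ Subtype.val_injective, ← Nat.card_coe_set_eq,
      Nat.card_range_of_injective hroot_inj]
  have hcard := Set.ncard_compl_union_sdiff hRL fun v (hv : v ∈ L) => hv.1
  omega

/-- Forest Bound for the Laplacian spectrum: if `W` is an induced forest of `G`
without isolated vertices, with `l` leaves and `c` connected components, then
every Laplacian eigenvalue `μ` of `G` has multiplicity at most
`|V| - |W| + l - c`. -/
theorem laplacian_mult_forest_bound {V : Type*} [Fintype V] [DecidableEq V]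
    (G : SimpleGraph V) [DecidableRel G.Adj] (μ : ℝ)
    (hμ : Module.End.HasEigenvalue (Matrix.toLin' (G.lapMatrix ℝ)) μ)
    (W : Set V)
    (hforest : (G.induce W).IsAcyclic)
    (hniso : ∀ v ∈ W, (G.neighborSet v ∩ W).Nonempty)
    (l c : ℕ)
    (hl : l = {v | v ∈ W ∧ (G.neighborSet v ∩ W).ncard = 1}.ncard)
    (hc : c = Nat.card (G.induce W).ConnectedComponent) :
    (Module.finrank ℝ
        (Module.End.eigenspace (Matrix.toLin' (G.lapMatrix ℝ)) μ) : ℤ)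
      ≤ (Fintype.card V : ℤ) - W.ncard + l - c :=
  laplacian_mult_forest_bound_general G μ W hforest hniso l c hl hc
end

section
/- Let G = (V, E) be a finite simple graph and let λ ∈ ℝ be an eigenvalue of the adjacency matrix of G, with multiplicity mult(λ) = dim_ℝ {x ∈ ℝ^V : Ax = λx}. Let W ⊆ V be an induced forest of G with no isolated vertices, with l leaves and c connected components. Then mult(λ) ≤ |V| − |W| + l − c. -/
/-!
Choose one leaf `r` in every tree component of the forest `W` and let `S` consist of the vertices
outside `W` together with the other leaves of `W`, so that `|S| = |V| - |W| + l - c`. An eigenvector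
vanishing on `S` vanishes everywhere: on a component with chosen leaf `r`, a nonzero entry `x v` at
maximal distance from `r` cannot have a child `c` (in the eigen-equation at `c` every other term
vanishes, forcing `x v = 0`), and the acyclicity makes `v`'s parent unique, so `v` is a leaf
other than `r`, on which `x` vanishes. Hence restriction to `S` is injective on the eigenspace.
-/

open Finset Matrix

namespace SimpleGraph

section Acyclic

variable {α : Type*} {H : SimpleGraph α}

theorem IsAcyclic.eq_of_adj_of_dist_add_one_eq (hH : H.IsAcyclic) {r c w w' : α}
    (hrc : H.Reachable r c) (hw : H.Adj c w) (hw' : H.Adj c w')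
    (hdw : H.dist r w + 1 = H.dist r c) (hdw' : H.dist r w' + 1 = H.dist r c) : w = w' := by
  classical
  obtain ⟨p, hp, -⟩ := hrc.exists_path_of_dist
  have eq_penultimate : ∀ u, H.Adj c u → H.dist r u + 1 = H.dist r c → u = p.penultimate := by
    intro u hu hdu
    obtain ⟨q, hq, hql⟩ := (hrc.trans hu.reachable).exists_path_of_dist
    refine hH.eq_penultimate_of_adj_end hp hu
      (hH.mem_support_of_ne_mem_support_of_adj_of_isPath hp hq hu fun hcq => ?_)
    have := (H.dist_le (q.takeUntil c hcq)).trans (q.length_takeUntil_le_length hcq)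
    omega
  rw [eq_penultimate w hw hdw, eq_penultimate w' hw' hdw']

theorem IsAcyclic.degree_eq_one_of_forall_adj_dist_add_one_eq [Fintype α] [DecidableRel H.Adj]
    (hH : H.IsAcyclic) {r v : α} (hrv : H.Reachable r v) (hv : ∃ w, H.Adj v w)
    (hparent : ∀ w, H.Adj v w → H.dist r w + 1 = H.dist r v) : H.degree v = 1 := by
  obtain ⟨w, hw⟩ := hv
  exact degree_eq_one_iff_existsUnique_adj.mpr ⟨w, hw, fun u hu =>
    hH.eq_of_adj_of_dist_add_one_eq hrv hu hw (hparent u hu) (hparent w hw)⟩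

theorem IsAcyclic.exists_reachable_degree_eq_one [Fintype α] [DecidableRel H.Adj]
    (hH : H.IsAcyclic) (hiso : ∀ v, ∃ w, H.Adj v w) (r : α) :
    ∃ v, H.Reachable r v ∧ H.degree v = 1 := by
  classical
  obtain ⟨v, hrv, hmax⟩ := (univ.filter (H.Reachable r)).exists_max_image (H.dist r)
    ⟨r, by simp⟩
  simp only [mem_filter, mem_univ, true_and] at hrv hmax
  refine ⟨v, hrv, hH.degree_eq_one_of_forall_adj_dist_add_one_eq hrv (hiso v) fun w hw => ?_⟩
  have := hmax w (hrv.trans hw.reachable)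
  have := hH.dist_eq_dist_add_one_of_adj_of_reachable r hw hrv
  omega

theorem IsAcyclic.exists_section_degree_eq_one [Fintype α] [DecidableRel H.Adj]
    (hH : H.IsAcyclic) (hiso : ∀ v, ∃ w, H.Adj v w) :
    ∃ R : H.ConnectedComponent → α,
      ∀ K, H.connectedComponentMk (R K) = K ∧ H.degree (R K) = 1 := by
  have hleaf (K : H.ConnectedComponent) :
      ∃ v, H.connectedComponentMk v = K ∧ H.degree v = 1 := by
    obtain ⟨u, rfl⟩ := K.exists_rep
    obtain ⟨v, huv, hv⟩ := hH.exists_reachable_degree_eq_one hiso u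
    exact ⟨v, (ConnectedComponent.sound huv).symm, hv⟩
  choose R hR using hleaf
  exact ⟨R, hR⟩

theorem IsAcyclic.eq_zero_of_adjMatrix_mulVec_eq_smul [Fintype α] [DecidableRel H.Adj]
    (hH : H.IsAcyclic) (hiso : ∀ v, ∃ w, H.Adj v w) (root : H.ConnectedComponent → α)
    (hroot : ∀ K, H.connectedComponentMk (root K) = K) {μ : ℝ} {x : α → ℝ}
    (hx : H.adjMatrix ℝ *ᵥ x = μ • x)
    (hleaf : ∀ v, H.degree v = 1 → v ≠ root (H.connectedComponentMk v) → x v = 0) :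
    x = 0 := by
  classical
  by_contra hne
  obtain ⟨v₀, hv₀⟩ : ∃ v, x v ≠ 0 := Function.ne_iff.mp hne
  set r := root (H.connectedComponentMk v₀) with hr
  have hrv₀ : H.Reachable r v₀ := ConnectedComponent.exact (hroot _)
  obtain ⟨v, hv, hmax⟩ := (univ.filter fun u => H.Reachable r u ∧ x u ≠ 0).exists_max_image
    (H.dist r) ⟨v₀, by simp [hrv₀, hv₀]⟩
  simp only [mem_filter, mem_univ, true_and, and_imp] at hv hmax
  obtain ⟨hrv, hxv⟩ := hv
  have hfar : ∀ u, H.Reachable r u → H.dist r v < H.dist r u → x u = 0 := fun u hru hlt =>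
    by_contra fun hxu => (hmax u hru hxu).not_gt hlt
  have hno_child : ∀ c, H.Adj v c → H.dist r c ≠ H.dist r v + 1 := by
    intro c hvc hdc
    have hrc := hrv.trans hvc.reachable
    have heq := congrFun hx c
    rw [adjMatrix_mulVec_apply, Pi.smul_apply, hfar c hrc (by omega), smul_zero,
      sum_eq_single v] at heq
    · exact hxv heq
    · intro u hcu huv
      rw [mem_neighborFinset] at hcu
      rcases hH.dist_eq_dist_add_one_of_adj_of_reachable r hcu hrc with hdu | hdu
      · exact absurd (hH.eq_of_adj_of_dist_add_one_eq hrc hcu hvc.symm hdu.symm (by omega)) huv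
      · exact hfar u (hrc.trans hcu.reachable) (by omega)
    · exact fun h => (h ((H.mem_neighborFinset _ _).mpr hvc.symm)).elim
  have hparent : ∀ w, H.Adj v w → H.dist r w + 1 = H.dist r v := fun w hw => by
    have := hH.dist_eq_dist_add_one_of_adj_of_reachable r hw hrv
    have := hno_child w hw
    omega
  have hvr : v ≠ r := fun hvr => by
    obtain ⟨w, hw⟩ := hiso v
    have := hparent w hw
    rw [hvr, dist_self] at this
    omega
  have hroot_v : root (H.connectedComponentMk v) = r := by
    rw [← ConnectedComponent.sound hrv, hr, hroot]
  exact hxv (hleaf v (hH.degree_eq_one_of_forall_adj_dist_add_one_eq hrv (hiso v) hparent)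
    (hroot_v ▸ hvr))

end Acyclic

def inducedLeaves {V : Type*} (G : SimpleGraph V) (s : Set V) : Set V :=
  {v | v ∈ s ∧ (G.neighborSet v ∩ s).ncard = 1}

section Induce

variable {V : Type*} [Fintype V] (G : SimpleGraph V) [DecidableRel G.Adj]
  (s : Set V) [DecidablePred (· ∈ s)]

theorem degree_induce (v : s) : (G.induce s).degree v = (G.neighborSet v ∩ s).ncard := by
  classical
  rw [← card_neighborFinset_eq_degree, ← card_map, map_neighborFinset_induce,
    ← Set.ncard_coe_finset]
  simp

theorem adjMatrix_induce_mulVec {R : Type*} [NonAssocSemiring R] {x : V → R}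
    (hx : ∀ v ∉ s, x v = 0) :
    (G.induce s).adjMatrix R *ᵥ (fun v : s => x v) = fun v : s => (G.adjMatrix R *ᵥ x) v := by
  classical
  ext v
  rw [adjMatrix_mulVec_apply, adjMatrix_mulVec_apply]
  calc ∑ u ∈ (G.induce s).neighborFinset v, x u
      = ∑ u ∈ ((G.induce s).neighborFinset v).map (.subtype (· ∈ s)), x u := by
        rw [sum_map]; rfl
    _ = ∑ u ∈ G.neighborFinset v ∩ s.toFinset, x u := by rw [map_neighborFinset_induce]
    _ = ∑ u ∈ G.neighborFinset v, x u :=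
      sum_subset inter_subset_left fun u hu hus => hx u fun hu' => hus (by simpa [hu'] using hu)

theorem IsAcyclic.eq_zero_of_induce (hW : (G.induce s).IsAcyclic)
    (hiso : ∀ v : s, ∃ w, (G.induce s).Adj v w) (root : (G.induce s).ConnectedComponent → s)
    (hroot : ∀ K, (G.induce s).connectedComponentMk (root K) = K) {μ : ℝ} {x : V → ℝ}
    (hx : G.adjMatrix ℝ *ᵥ x = μ • x)
    (hxS : Set.EqOn x 0 (sᶜ ∪ (G.inducedLeaves s \ Set.range (Subtype.val ∘ root)))) :
    x = 0 := by
  have hxs : ∀ v ∉ s, x v = 0 := fun v hv => hxS (Or.inl hv)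
  have hy : (G.induce s).adjMatrix ℝ *ᵥ (fun v : s => x v) = μ • fun v : s => x v := by
    rw [adjMatrix_induce_mulVec G s hxs, hx]
    rfl
  have hleaf : ∀ v : s, (G.induce s).degree v = 1 →
      v ≠ root ((G.induce s).connectedComponentMk v) → x v = 0 := by
    intro v hv hvroot
    refine hxS (Or.inr ⟨⟨v.2, degree_induce G s v ▸ hv⟩, ?_⟩)
    rintro ⟨K, hK⟩
    obtain rfl : root K = v := Subtype.ext hK
    exact hvroot (by rw [hroot])
  have hy0 := IsAcyclic.eq_zero_of_adjMatrix_mulVec_eq_smul hW hiso root hroot hy hleaf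
  funext v
  by_cases hv : v ∈ s
  · exact congrFun hy0 ⟨v, hv⟩
  · exact hxs v hv

end Induce

end SimpleGraph

theorem Submodule.finrank_le_ncard_of_eq_zero_of_eqOn {K ι : Type*} [Field K] [Finite ι]
    (E : Submodule K (ι → K)) (S : Set ι) (h : ∀ x ∈ E, Set.EqOn x 0 S → x = 0) :
    Module.finrank K E ≤ S.ncard := by
  have : Fintype S := Fintype.ofFinite S
  have hinj : Function.Injective (LinearMap.funLeft K K ((↑) : S → ι) ∘ₗ E.subtype) := by
    rw [← LinearMap.ker_eq_bot, LinearMap.ker_eq_bot']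
    intro x hx
    exact Subtype.ext (h x x.2 fun i hi => congrFun hx ⟨i, hi⟩)
  calc Module.finrank K E ≤ Module.finrank K (S → K) :=
        LinearMap.finrank_le_finrank_of_injective hinj
    _ = S.ncard := by rw [Module.finrank_fintype_fun_eq_card, ← Nat.card_eq_fintype_card,
        Nat.card_coe_set_eq]

theorem Set.ncard_compl_union_diff_add {α : Type*} [Fintype α] {W L R : Set α} (hLW : L ⊆ W)
    (hRL : R ⊆ L) : (Wᶜ ∪ (L \ R)).ncard + W.ncard + R.ncard = Fintype.card α + L.ncard := by
  have hdisj : Disjoint Wᶜ (L \ R) :=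
    Set.disjoint_left.mpr fun v hv hvL => hv (hLW hvL.1)
  have hunion := Set.ncard_union_eq hdisj
  have hdiff := Set.ncard_sdiff_add_ncard_of_subset hRL
  have hcompl := Set.ncard_add_ncard_compl W
  rw [Nat.card_eq_fintype_card] at hcompl
  omega

theorem adjacency_mult_forest_bound_general {V : Type*} [Fintype V] [DecidableEq V]
    (G : SimpleGraph V) [DecidableRel G.Adj] (μ : ℝ)
    (W : Set V)
    (hforest : (G.induce W).IsAcyclic)
    (hniso : ∀ v ∈ W, (G.neighborSet v ∩ W).Nonempty)
    (l c : ℕ)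
    (hl : l = {v | v ∈ W ∧ (G.neighborSet v ∩ W).ncard = 1}.ncard)
    (hc : c = Nat.card (G.induce W).ConnectedComponent) :
    (Module.finrank ℝ
        (Module.End.eigenspace (Matrix.toLin' (G.adjMatrix ℝ)) μ) : ℤ)
      ≤ (Fintype.card V : ℤ) - W.ncard + l - c := by
  classical
  have hiso : ∀ v : W, ∃ w, (G.induce W).Adj v w := fun v =>
    let ⟨w, hw, hwW⟩ := hniso v v.2
    ⟨⟨w, hwW⟩, hw⟩
  obtain ⟨R, hR⟩ := hforest.exists_section_degree_eq_one hiso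
  choose hRK hRdeg using hR
  have hRinj : Function.Injective (Subtype.val ∘ R) := fun K K' h => by
    rw [← hRK K, ← hRK K', Subtype.val_injective h]
  have hRc : (Set.range (Subtype.val ∘ R)).ncard = c := by
    rw [← Nat.card_coe_set_eq, Nat.card_range_of_injective hRinj, hc]
  have hRL : Set.range (Subtype.val ∘ R) ⊆ G.inducedLeaves W :=
    Set.range_subset_iff.mpr fun K =>
      ⟨(R K).2, (SimpleGraph.degree_induce G W (R K)).symm.trans (hRdeg K)⟩
  set E := Module.End.eigenspace (Matrix.toLin' (G.adjMatrix ℝ)) μ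
  have hrank := E.finrank_le_ncard_of_eq_zero_of_eqOn _ fun x hx =>
    hforest.eq_zero_of_induce G W hiso R hRK
      ((Matrix.toLin'_apply _ x).symm.trans (Module.End.mem_eigenspace_iff.mp hx))
  have hcard := Set.ncard_compl_union_diff_add (fun v hv => hv.1) hRL
  have hl' : l = (G.inducedLeaves W).ncard := hl
  omega

/-- Forest Bound for the adjacency spectrum: if `W` is an induced forest of `G`
without isolated vertices, with `l` leaves and `c` connected components, then
every adjacency eigenvalue `μ` of `G` has multiplicity at most
`|V| - |W| + l - c`. -/
theorem adjacency_mult_forest_bound {V : Type*} [Fintype V] [DecidableEq V]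
    (G : SimpleGraph V) [DecidableRel G.Adj] (μ : ℝ)
    (hμ : Module.End.HasEigenvalue (Matrix.toLin' (G.adjMatrix ℝ)) μ)
    (W : Set V)
    (hforest : (G.induce W).IsAcyclic)
    (hniso : ∀ v ∈ W, (G.neighborSet v ∩ W).Nonempty)
    (l c : ℕ)
    (hl : l = {v | v ∈ W ∧ (G.neighborSet v ∩ W).ncard = 1}.ncard)
    (hc : c = Nat.card (G.induce W).ConnectedComponent) :
    (Module.finrank ℝ
        (Module.End.eigenspace (Matrix.toLin' (G.adjMatrix ℝ)) μ) : ℤ)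
      ≤ (Fintype.card V : ℤ) - W.ncard + l - c :=
  adjacency_mult_forest_bound_general G μ W hforest hniso l c hl hc
end

section
/- Let G = (V, E) be a finite simple graph and let λ ∈ ℝ be an eigenvalue of the Laplacian matrix of G such that λ ≠ deg(v) for every vertex v ∈ V. Then for every independent set S ⊆ V of G, mult(λ) ≤ |V| − |S|; in particular mult(λ) ≤ |V| − α(G), where α(G) is the maximum size of an independent set of G. -/
/-- Spectral bound on the largest independent set (Laplacian version): if `μ` is a
Laplacian eigenvalue of `G` with `μ ≠ deg v` for every vertex `v`, then for every
independent set `I` of `G` the multiplicity of `μ` is at most `|V| - |I|`; in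
particular it is at most `|V| - α(G)`, where `α(G)` is the maximum size of an
independent set. -/
theorem laplacian_mult_independent_bound {V : Type*} [Fintype V] [DecidableEq V]
    (G : SimpleGraph V) [DecidableRel G.Adj] (μ : ℝ)
    (hμ : Module.End.HasEigenvalue (Matrix.toLin' (G.lapMatrix ℝ)) μ)
    (hdeg : ∀ v : V, μ ≠ (G.degree v : ℝ)) :
    (∀ I : Set V, (∀ v ∈ I, ∀ w ∈ I, ¬ G.Adj v w) →
      Module.finrank ℝ
          (Module.End.eigenspace (Matrix.toLin' (G.lapMatrix ℝ)) μ)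
        ≤ Fintype.card V - I.ncard) ∧
    Module.finrank ℝ
        (Module.End.eigenspace (Matrix.toLin' (G.lapMatrix ℝ)) μ)
      ≤ Fintype.card V -
          sSup {n : ℕ | ∃ I : Set V, (∀ v ∈ I, ∀ w ∈ I, ¬ G.Adj v w) ∧ I.ncard = n} := by
  classical
  have key : ∀ I : Set V, (∀ v ∈ I, ∀ w ∈ I, ¬ G.Adj v w) →
      Module.finrank ℝ
          (Module.End.eigenspace (Matrix.toLin' (G.lapMatrix ℝ)) μ)
        ≤ Fintype.card V - I.ncard := by
    intro I hI
    set E := Module.End.eigenspace (Matrix.toLin' (G.lapMatrix ℝ)) μ with hE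
    -- restriction map to the complement of I
    let π : E →ₗ[ℝ] (↥(Iᶜ) → ℝ) :=
      { toFun := fun x v => (x : V → ℝ) v.1
        map_add' := fun x y => rfl
        map_smul' := fun c x => rfl }
    have hinj : Function.Injective π := by
      rw [injective_iff_map_eq_zero]
      intro x hx
      have hx0 : ∀ v : V, v ∉ I → (x : V → ℝ) v = 0 := by
        intro v hv
        have := congrFun hx ⟨v, hv⟩
        simpa [π] using this
      have heig : Matrix.toLin' (G.lapMatrix ℝ) (x : V → ℝ) = μ • (x : V → ℝ) :=
        Module.End.mem_eigenspace_iff.mp x.2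
      ext v
      simp only [ZeroMemClass.coe_zero, Pi.zero_apply]
      by_cases hv : v ∈ I
      · have h1 : Matrix.mulVec (G.lapMatrix ℝ) (x : V → ℝ) v = μ * (x : V → ℝ) v := by
          have := congrFun heig v
          simpa [Matrix.toLin'_apply] using this
        rw [SimpleGraph.lapMatrix_mulVec_apply] at h1
        have hsum : ∑ u ∈ G.neighborFinset v, (x : V → ℝ) u = 0 := by
          apply Finset.sum_eq_zero
          intro u hu
          rw [SimpleGraph.mem_neighborFinset] at hu
          exact hx0 u (fun huI => hI v hv u huI hu)
        rw [hsum, sub_zero] at h1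
        have : ((G.degree v : ℝ) - μ) * (x : V → ℝ) v = 0 := by ring_nf; linarith [h1]
        rcases mul_eq_zero.mp this with h | h
        · exact absurd (by linarith [sub_eq_zero.mp h] : μ = (G.degree v : ℝ)) (hdeg v)
        · exact h
      · exact hx0 v hv
    have hle := LinearMap.finrank_le_finrank_of_injective hinj
    have hcard : Module.finrank ℝ (↥(Iᶜ) → ℝ) = Fintype.card V - I.ncard := by
      rw [Module.finrank_pi, Fintype.card_compl_set]
      congr 1
      rw [Set.ncard_eq_toFinset_card', Set.toFinset_card]
    omega
  refine ⟨key, ?_⟩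
  set s := {n : ℕ | ∃ I : Set V, (∀ v ∈ I, ∀ w ∈ I, ¬ G.Adj v w) ∧ I.ncard = n} with hs
  have hne : s.Nonempty := ⟨0, ∅, by simp, by simp⟩
  have hbdd : BddAbove s := by
    refine ⟨Fintype.card V, fun n hn => ?_⟩
    obtain ⟨I, -, rfl⟩ := hn
    calc I.ncard ≤ (Set.univ : Set V).ncard := Set.ncard_le_ncard (Set.subset_univ I)
      _ = Fintype.card V := by rw [Set.ncard_univ, Nat.card_eq_fintype_card]
  obtain ⟨I, hI, hIc⟩ := Nat.sSup_mem hne hbdd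
  rw [← hIc]
  exact key I hI
end

section
/- Let G = (V, E) be a finite simple graph containing an induced path on k ≥ 2 vertices. Then for every eigenvalue λ of the Laplacian matrix of G, k ≤ 1 + |V| − mult(λ). -/
open Finset Matrix

/-- If an eigenvector of the Laplacian vanishes outside the "tail" `w 1, ..., w (k-1)` of an
induced path `w 0, ..., w (k-1)`, then it vanishes everywhere. -/
lemma lap_eig_vanish_of_path {V : Type*} [Fintype V] [DecidableEq V]
    (G : SimpleGraph V) [DecidableRel G.Adj]
    (k : ℕ) (w : Fin k → V) (hinj : Function.Injective w)
    (hadj : ∀ i j : Fin k, G.Adj (w i) (w j) ↔ (i.val + 1 = j.val ∨ j.val + 1 = i.val))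
    (μ : ℝ) (x : V → ℝ) (hx : G.lapMatrix ℝ *ᵥ x = μ • x)
    (h0 : ∀ v : V, (∀ i : Fin k, 0 < i.val → v ≠ w i) → x v = 0) :
    x = 0 := by
  have main : ∀ m : ℕ, ∀ i : Fin k, i.val ≤ m → x (w i) = 0 := by
    intro m
    induction m with
    | zero =>
      intro i hi
      apply h0
      intro j hj heq
      have := hinj heq
      subst this
      omega
    | succ m ih =>
      intro i hi
      rcases Nat.lt_or_ge i.val (m+1) with h | h
      · exact ih i (Nat.lt_succ_iff.mp h)
      · have him : i.val = m + 1 := le_antisymm hi h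
        have hmk : m < k := by have := i.isLt; omega
        set j : Fin k := ⟨m, hmk⟩ with hj
        have hxj : x (w j) = 0 := ih j le_rfl
        have heq := congrFun hx (w j)
        rw [SimpleGraph.lapMatrix_mulVec_apply] at heq
        have hμj : (μ • x) (w j) = μ * x (w j) := rfl
        rw [hμj, hxj, mul_zero, mul_zero, zero_sub] at heq
        have hsum : ∑ u ∈ G.neighborFinset (w j), x u = 0 := by linarith
        have hmem : w i ∈ G.neighborFinset (w j) := by
          rw [SimpleGraph.mem_neighborFinset, hadj]
          left
          simp [hj, him]
        have hsum2 : ∑ u ∈ G.neighborFinset (w j), x u = x (w i) := by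
          apply Finset.sum_eq_single_of_mem (w i) hmem
          intro u hu hne
          by_cases hc : ∀ t : Fin k, 0 < t.val → u ≠ w t
          · exact h0 u hc
          · push_neg at hc
            obtain ⟨t, ht, rfl⟩ := hc
            rw [SimpleGraph.mem_neighborFinset, hadj] at hu
            rcases hu with h1 | h1
            · exfalso
              apply hne
              congr 1
              apply Fin.ext
              simp only [hj] at h1
              omega
            · exact ih t (by simp only [hj] at h1; omega)
        rw [hsum2] at hsum
        exact hsum
  funext v
  by_cases hv : ∃ t : Fin k, v = w t
  · obtain ⟨t, rfl⟩ := hv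
    exact main t.val t le_rfl
  · push_neg at hv
    exact h0 v (fun i _ => hv i)

/-- Spectral bound on the longest induced path: if `G` contains an induced path on
`k ≥ 2` vertices, then for every Laplacian eigenvalue `μ` of `G` we have
`k ≤ 1 + |V| - mult(μ)`. -/
theorem laplacian_mult_induced_path_bound {V : Type*} [Fintype V] [DecidableEq V]
    (G : SimpleGraph V) [DecidableRel G.Adj]
    (k : ℕ) (hk : 2 ≤ k)
    (W : Set V) (hpath : Nonempty ((G.induce W) ≃g SimpleGraph.pathGraph k))
    (μ : ℝ)
    (hμ : Module.End.HasEigenvalue (Matrix.toLin' (G.lapMatrix ℝ)) μ) :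
    (k : ℤ) ≤ 1 + (Fintype.card V : ℤ) -
      Module.finrank ℝ
        (Module.End.eigenspace (Matrix.toLin' (G.lapMatrix ℝ)) μ) := by
  haveI : NeZero k := ⟨by omega⟩
  obtain ⟨e⟩ := hpath
  set f := e.symm with hf
  set w : Fin k → V := fun i => ((f i : W) : V) with hw
  have hinj : Function.Injective w := by
    intro a b hab
    exact f.toEquiv.injective (Subtype.ext hab)
  have hadj : ∀ i j : Fin k, G.Adj (w i) (w j) ↔ (i.val + 1 = j.val ∨ j.val + 1 = i.val) := by
    intro i j
    have h1 : (G.induce W).Adj (f i) (f j) ↔ (SimpleGraph.pathGraph k).Adj i j :=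
      f.map_adj_iff
    have h2 : (G.induce W).Adj (f i) (f j) ↔ G.Adj (w i) (w j) := Iff.rfl
    rw [← h2, h1, SimpleGraph.pathGraph_adj]
  -- the tail of the path
  set T : Finset V := (Finset.univ.erase (0 : Fin k)).image w with hT
  have hTcard : T.card = k - 1 := by
    rw [hT, Finset.card_image_of_injective _ hinj, Finset.card_erase_of_mem (mem_univ _),
      Finset.card_univ, Fintype.card_fin]
  set E := Module.End.eigenspace (Matrix.toLin' (G.lapMatrix ℝ)) μ with hE
  let φ : E →ₗ[ℝ] ({ v // v ∈ Tᶜ } → ℝ) :=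
    { toFun := fun x v => (x : V → ℝ) v.1
      map_add' := fun a b => rfl
      map_smul' := fun c a => rfl }
  have hφ : Function.Injective φ := by
    rw [injective_iff_map_eq_zero]
    intro a ha
    have hx : G.lapMatrix ℝ *ᵥ (a : V → ℝ) = μ • (a : V → ℝ) := by
      have h2 : Matrix.toLin' (G.lapMatrix ℝ) (a : V → ℝ) = μ • (a : V → ℝ) :=
        Module.End.mem_eigenspace_iff.mp a.2
      rwa [Matrix.toLin'_apply] at h2
    have h0 : ∀ v : V, (∀ i : Fin k, 0 < i.val → v ≠ w i) → (a : V → ℝ) v = 0 := by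
      intro v hv
      have hvT : v ∈ Tᶜ := by
        rw [Finset.mem_compl]
        intro hmem
        rw [hT, Finset.mem_image] at hmem
        obtain ⟨i, hi, hwi⟩ := hmem
        rw [Finset.mem_erase] at hi
        refine hv i ?_ hwi.symm
        exact Nat.pos_of_ne_zero (fun h => hi.1 (by ext; simpa using h))
      exact congrFun ha ⟨v, hvT⟩
    have := lap_eig_vanish_of_path G k w hinj hadj μ (a : V → ℝ) hx h0
    exact Subtype.ext this
  have hle : Module.finrank ℝ E ≤ Tᶜ.card := by
    have h := LinearMap.finrank_le_finrank_of_injective hφ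
    rwa [Module.finrank_pi, Fintype.card_coe] at h
  have hcompl : Tᶜ.card = Fintype.card V - T.card := Finset.card_compl T
  have hkV : k ≤ Fintype.card V := by
    have := Fintype.card_le_of_injective w hinj
    simpa using this
  rw [hcompl, hTcard] at hle
  omega
end

section
/- Let T be a finite tree (a connected acyclic finite simple graph) with at least 2 vertices, and let λ be an eigenvalue of the Laplacian matrix of T. Then mult(λ) ≤ l(T) − 1, where l(T) is the number of leaves of T. -/
open SimpleGraph Matrix Module Finset

section Aux

variable {V : Type*} [Fintype V] [DecidableEq V] {T : SimpleGraph V} [DecidableRel T.Adj]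

/-- In an acyclic graph, if `y ~ w`, then for paths `p : y → v0` and `q : w → v0`,
either `p = cons q` or `q = cons p`. -/
lemma tree_path_step (hac : T.IsAcyclic) {y w v0 : V} (hadj : T.Adj y w)
    (p : T.Walk y v0) (q : T.Walk w v0) (hp : p.IsPath) (hq : q.IsPath) :
    p = SimpleGraph.Walk.cons hadj q ∨ q = SimpleGraph.Walk.cons hadj.symm p := by
  by_cases hmem : y ∈ q.support
  · right
    have h1 : q.takeUntil y hmem = SimpleGraph.Walk.cons hadj.symm SimpleGraph.Walk.nil := by
      have hp1 : (q.takeUntil y hmem).IsPath := hq.takeUntil hmem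
      have hp2 : (SimpleGraph.Walk.cons hadj.symm SimpleGraph.Walk.nil).IsPath := by
        simp [hadj.symm.ne]
      exact congrArg Subtype.val (hac.path_unique ⟨_, hp1⟩ ⟨_, hp2⟩)
    have h2 : q.dropUntil y hmem = p :=
      congrArg Subtype.val (hac.path_unique ⟨_, hq.dropUntil hmem⟩ ⟨_, hp⟩)
    calc q = (q.takeUntil y hmem).append (q.dropUntil y hmem) := (q.take_spec hmem).symm
    _ = SimpleGraph.Walk.cons hadj.symm p := by
        rw [h1, h2]; simp [SimpleGraph.Walk.cons_append]
  · left
    have hc : (SimpleGraph.Walk.cons hadj q).IsPath := hq.cons hmem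
    exact congrArg Subtype.val (hac.path_unique ⟨_, hp⟩ ⟨_, hc⟩)

/-- A tree with at least two vertices has a leaf. -/
lemma tree_exists_leaf (htree : T.IsTree) (hcard : 2 ≤ Fintype.card V) :
    ∃ v : V, T.degree v = 1 := by
  by_contra h
  push_neg at h
  have hdeg : ∀ v : V, 2 ≤ T.degree v := by
    intro v
    obtain ⟨w, hw⟩ := Fintype.exists_ne_of_one_lt_card (by omega) v
    have hreach : T.Reachable v w := htree.isConnected.preconnected v w
    have hpos : 0 < T.degree v := by
      obtain ⟨p⟩ := hreach
      have hnn : ¬ p.Nil := by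
        intro hn
        exact hw.symm (SimpleGraph.Walk.Nil.eq hn)
      obtain ⟨u, hadj, q, rfl⟩ := SimpleGraph.Walk.not_nil_iff.mp hnn
      exact (T.degree_pos_iff_exists_adj v).mpr ⟨u, hadj⟩
    have := h v
    omega
  have hsum : ∑ v : V, T.degree v = 2 * T.edgeFinset.card :=
    T.sum_degrees_eq_twice_card_edges
  have hedges : T.edgeFinset.card + 1 = Fintype.card V := htree.card_edgeFinset
  have h2 : 2 * Fintype.card V ≤ ∑ v : V, T.degree v := by
    calc 2 * Fintype.card V = ∑ _v : V, 2 := by simp [mul_comm]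
    _ ≤ ∑ v : V, T.degree v := Finset.sum_le_sum fun v _ => hdeg v
  omega

/-- Key lemma: an eigenvector of the Laplacian of a tree that vanishes on every
leaf other than `v0` is identically zero. -/
lemma tree_eigenvector_zero (htree : T.IsTree) (hcard : 2 ≤ Fintype.card V)
    {μ : ℝ} {x : V → ℝ}
    (hx : T.lapMatrix ℝ *ᵥ x = μ • x) (v0 : V)
    (hleaf : ∀ w, w ≠ v0 → T.degree w = 1 → x w = 0) :
    x = 0 := by
  classical
  -- the sum rule coming from the Laplacian equation
  have eqsum : ∀ w : V, x w = 0 → ∀ z ∈ T.neighborFinset w,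
      (∀ u ∈ T.neighborFinset w, u ≠ z → x u = 0) → x z = 0 := by
    intro w hw z hz hothers
    have h1 : (T.lapMatrix ℝ *ᵥ x) w = (μ • x) w := congrFun hx w
    rw [T.lapMatrix_mulVec_apply] at h1
    have h2 : ∑ u ∈ T.neighborFinset w, x u = 0 := by
      simp only [Pi.smul_apply, smul_eq_mul, hw, mul_zero] at h1
      linarith
    have h3 : ∑ u ∈ T.neighborFinset w, x u = x z :=
      Finset.sum_eq_single_of_mem z hz fun u hu hne => hothers u hu hne
    rw [h3] at h2
    exact h2
  -- choose paths to v0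
  have hex : ∀ w : V, ∃ p : T.Walk w v0, p.IsPath := by
    intro w
    obtain ⟨q⟩ := htree.isConnected.preconnected w v0
    exact ⟨q.toPath.1, q.toPath.2⟩
  choose P hP using hex
  have huniq : ∀ {w : V} (q : T.Walk w v0), q.IsPath → q = P w := fun q hq =>
    congrArg Subtype.val (htree.IsAcyclic.path_unique ⟨q, hq⟩ ⟨P _, hP _⟩)
  have hPv0 : P v0 = SimpleGraph.Walk.nil := (huniq SimpleGraph.Walk.nil (by simp)).symm
  -- main induction: propagate zeros toward v0
  have key : ∀ n : ℕ, ∀ w : V, w ≠ v0 → Fintype.card V ≤ (P w).length + n →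
      x w = 0 ∧ ∀ (y : V) (h : T.Adj w y), P w = SimpleGraph.Walk.cons h (P y) → x y = 0 := by
    intro n
    induction n with
    | zero =>
      intro w hw hlen
      have := (hP w).length_lt
      omega
    | succ n ih =>
      intro w hw hlen
      -- decompose the path from w
      have hnn : ¬ (P w).Nil := by
        intro hn
        exact hw (SimpleGraph.Walk.Nil.eq hn)
      obtain ⟨p, hwp, q, hq⟩ := SimpleGraph.Walk.not_nil_iff.mp hnn
      have hqpath : q.IsPath := by
        have := hP w
        rw [hq] at this
        exact this.of_cons
      have hqP : q = P p := huniq q hqpath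
      rw [hqP] at hq
      -- hq : P w = cons hwp (P p)
      have hlenw : (P w).length = (P p).length + 1 := by
        rw [hq]; simp
      have hpmem : p ∈ T.neighborFinset w := (T.mem_neighborFinset w p).mpr hwp
      -- any neighbor u ≠ p of w has x u = 0 and forces x w = 0 via its own path
      have hside : ∀ u ∈ T.neighborFinset w, u ≠ p →
          x u = 0 ∧ x w = 0 := by
        intro u hu hup
        have hadj : T.Adj u w := ((T.mem_neighborFinset w u).mp hu).symm
        rcases tree_path_step htree.IsAcyclic hadj (P u) (P w) (hP u) (hP w) with hcase | hcase
        · -- P u = cons hadj (P w) : w is the parent of u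
          have huv0 : u ≠ v0 := by
            intro h
            subst h
            rw [hPv0] at hcase
            simp at hcase
          have hlenu : (P u).length = (P w).length + 1 := by rw [hcase]; simp
          have := ih u huv0 (by omega)
          exact ⟨this.1, this.2 w hadj hcase⟩
        · -- P w = cons hadj.symm (P u), so u = p : contradiction
          exfalso
          apply hup
          have h1 := congrArg (fun t => t.getVert 1) hcase
          have h2 := congrArg (fun t => t.getVert 1) hq
          simp only [SimpleGraph.Walk.getVert_cons_succ, SimpleGraph.Walk.getVert_zero] at h1 h2
          rw [← h1, h2]
      -- x w = 0
      have hxw : x w = 0 := by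
        by_cases hdeg : T.degree w = 1
        · exact hleaf w hw hdeg
        · -- degree ≥ 2 : there is a neighbor distinct from p
          have hdeg2 : 1 < (T.neighborFinset w).card := by
            have h1 : 0 < (T.neighborFinset w).card := Finset.card_pos.mpr ⟨p, hpmem⟩
            have : T.degree w = (T.neighborFinset w).card := rfl
            omega
          obtain ⟨c, hc, hcp⟩ := Finset.exists_mem_ne hdeg2 p
          exact (hside c hc hcp).2
      refine ⟨hxw, ?_⟩
      intro y h hy
      -- y = p
      have hyp : y = p := by
        have h1 := congrArg (fun t => t.getVert 1) hy
        have h2 := congrArg (fun t => t.getVert 1) hq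
        simp only [SimpleGraph.Walk.getVert_cons_succ, SimpleGraph.Walk.getVert_zero] at h1 h2
        rw [← h1, h2]
      subst hyp
      exact eqsum w hxw y hpmem fun u hu hne => (hside u hu hne).1
  have hzero : ∀ w : V, w ≠ v0 → x w = 0 := fun w hw =>
    (key (Fintype.card V) w hw (by omega)).1
  -- finally x v0 = 0
  have hv0 : x v0 = 0 := by
    obtain ⟨w, hw⟩ := Fintype.exists_ne_of_one_lt_card (by omega) v0
    obtain ⟨q⟩ := htree.isConnected.preconnected v0 w
    have hnn : ¬ q.Nil := by
      intro hn
      exact hw.symm (SimpleGraph.Walk.Nil.eq hn)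
    obtain ⟨u0, hadj, r, rfl⟩ := SimpleGraph.Walk.not_nil_iff.mp hnn
    have hu0 : u0 ≠ v0 := hadj.ne'
    have hxu0 : x u0 = 0 := hzero u0 hu0
    have hv0mem : v0 ∈ T.neighborFinset u0 := (T.mem_neighborFinset u0 v0).mpr hadj.symm
    exact eqsum u0 hxu0 v0 hv0mem fun u hu hne => hzero u hne
  funext w
  by_cases hwv : w = v0
  · rw [hwv]; exact hv0
  · exact hzero w hwv

end Aux

/-- Multiplicities in trees: if `T` is a finite tree with at least `2` vertices,
then every Laplacian eigenvalue `μ` of `T` has multiplicity at most `l(T) - 1`,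
where `l(T)` is the number of leaves of `T`. -/
theorem laplacian_mult_tree_bound {V : Type*} [Fintype V] [DecidableEq V]
    (T : SimpleGraph V) [DecidableRel T.Adj]
    (htree : T.IsTree) (hcard : 2 ≤ Fintype.card V)
    (μ : ℝ)
    (hμ : Module.End.HasEigenvalue (Matrix.toLin' (T.lapMatrix ℝ)) μ) :
    (Module.finrank ℝ
        (Module.End.eigenspace (Matrix.toLin' (T.lapMatrix ℝ)) μ) : ℤ)
      ≤ ({v : V | T.degree v = 1}.ncard : ℤ) - 1 := by
  classical
  obtain ⟨v0, hv0⟩ := tree_exists_leaf htree hcard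
  set L : Finset V := Finset.univ.filter (fun v => T.degree v = 1) with hL
  set s : Finset V := L.erase v0 with hs
  set E := Module.End.eigenspace (Matrix.toLin' (T.lapMatrix ℝ)) μ with hE
  let Φ : E →ₗ[ℝ] ((i : s) → ℝ) :=
    { toFun := fun x i => (x : V → ℝ) i.1
      map_add' := fun a b => rfl
      map_smul' := fun c a => rfl }
  have hinj : Function.Injective Φ := by
    rw [injective_iff_map_eq_zero]
    intro a ha
    have hx : T.lapMatrix ℝ *ᵥ (a : V → ℝ) = μ • (a : V → ℝ) := by
      have h2 : (a : V → ℝ) ∈ Module.End.eigenspace (Matrix.toLin' (T.lapMatrix ℝ)) μ := a.2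
      rw [Module.End.mem_eigenspace_iff, Matrix.toLin'_apply] at h2
      exact h2
    have hzero : (a : V → ℝ) = 0 := by
      refine tree_eigenvector_zero htree hcard hx v0 ?_
      intro w hw hdeg
      have hmem : w ∈ s := by
        rw [hs, hL]
        simp [hw, hdeg]
      exact congrFun ha ⟨w, hmem⟩
    exact Subtype.ext hzero
  have h1 : Module.finrank ℝ E ≤ Module.finrank ℝ ((i : s) → ℝ) :=
    LinearMap.finrank_le_finrank_of_injective hinj
  have h2 : Module.finrank ℝ ((i : s) → ℝ) = s.card := by
    rw [Module.finrank_pi]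
    exact Fintype.card_coe s
  have h3 : ({v : V | T.degree v = 1}).ncard = L.card := by
    rw [Set.ncard_eq_toFinset_card']
    congr 1
    ext v
    simp [hL]
  have hv0mem : v0 ∈ L := by simp [hL, hv0]
  have h4 : s.card = L.card - 1 := by rw [hs]; exact Finset.card_erase_of_mem hv0mem
  have h5 : 1 ≤ L.card := Finset.card_pos.mpr ⟨v0, hv0mem⟩
  rw [h3]
  omega
end

section
/- Let G = (V, E) be a finite simple graph with Laplacian matrix L and let λ ∈ ℝ. Then the eigenspace X = {x ∈ ℝ^V : Lx = λx}, viewed as a subset of the product ∏_{v∈V} ℝ, is 1-compatible with G. Moreover, if λ ≠ deg(v) for every v ∈ V, then X is strongly 1-compatible with G. -/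
lemma determines_one_of_agree {V : Type*} {F : V → Type*} (S : Set (∀ v, F v))
    (A B : Set V)
    (h : ∀ x ∈ S, ∀ y ∈ S, (∀ a ∈ A, x a = y a) → ∀ b ∈ B, x b = y b) :
    Determines S A B 1 := by
  intro c
  rw [Nat.cast_one, Set.encard_le_one_iff]
  rintro f g ⟨x, ⟨hxS, hxc⟩, rfl⟩ ⟨y, ⟨hyS, hyc⟩, rfl⟩
  funext b
  exact h x hxS y hyS (fun a ha => ((hxc ⟨a, ha⟩).trans (hyc ⟨a, ha⟩).symm)) b b.2

/-- A Laplacian eigenspace `X = {x : ℝ^V | Lx = μx}` is `1`-compatible with `G`,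
and strongly `1`-compatible if `μ ≠ deg v` for every vertex `v`. -/
theorem laplacian_eigenspace_compatible {V : Type*} [Fintype V] [DecidableEq V]
    (G : SimpleGraph V) [DecidableRel G.Adj] (μ : ℝ)
    (X : Set (V → ℝ))
    (hX : X = {x : V → ℝ | (G.lapMatrix ℝ).mulVec x = μ • x}) :
    Compatible X G 1 ∧
      ((∀ v : V, μ ≠ (G.degree v : ℝ)) → StronglyCompatible X G 1) := by
  have key : ∀ x ∈ X, ∀ v : V,
      (G.degree v : ℝ) * x v - ∑ u ∈ G.neighborFinset v, x u = μ * x v := by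
    intro x hx v
    rw [hX] at hx
    have := congrFun hx v
    rw [G.lapMatrix_mulVec_apply v x] at this
    simpa using this
  have hcompat : Compatible X G 1 := by
    intro v w hvw
    apply determines_one_of_agree
    intro x hxS y hyS hagree b hb
    rcases hb with rfl
    have hvA : v ∈ (insert v (G.neighborSet v)) \ {b} :=
      ⟨Set.mem_insert _ _, by simpa using hvw.ne⟩
    have hv : x v = y v := hagree v hvA
    have hw : b ∈ G.neighborFinset v := by simpa using hvw
    have herase : ∑ u ∈ (G.neighborFinset v).erase b, x u
        = ∑ u ∈ (G.neighborFinset v).erase b, y u := by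
      apply Finset.sum_congr rfl
      intro u hu
      have hu' := Finset.mem_erase.mp hu
      exact hagree u ⟨Set.mem_insert_of_mem _ (by simpa using hu'.2), by simpa using hu'.1⟩
    have hx' := key x hxS v
    have hy' := key y hyS v
    have hsx : ∑ u ∈ (G.neighborFinset v).erase b, x u + x b
        = ∑ u ∈ G.neighborFinset v, x u := Finset.sum_erase_add _ _ hw
    have hsy : ∑ u ∈ (G.neighborFinset v).erase b, y u + y b
        = ∑ u ∈ G.neighborFinset v, y u := Finset.sum_erase_add _ _ hw
    rw [hv] at hx'
    linarith [hx', hy', hsx, hsy, herase]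
  refine ⟨hcompat, fun hμ => ⟨hcompat, ?_⟩⟩
  intro v
  apply determines_one_of_agree
  intro x hxS y hyS hagree b hb
  rcases hb with rfl
  have hsum : ∑ u ∈ G.neighborFinset b, x u = ∑ u ∈ G.neighborFinset b, y u := by
    apply Finset.sum_congr rfl
    intro u hu
    exact hagree u (by simpa using hu)
  have hx' := key x hxS b
  have hy' := key y hyS b
  have hne : (G.degree b : ℝ) - μ ≠ 0 := sub_ne_zero.mpr (fun h => hμ b h.symm)
  have : ((G.degree b : ℝ) - μ) * (x b - y b) = 0 := by ring_nf; linarith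
  rcases mul_eq_zero.mp this with h | h
  · exact absurd h hne
  · linarith
end
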